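/- arXiv:2601.20217 — 8 statements merged into one kernel-verified Lean document; each statement's English description precedes it below -/
import Mathlib

section
/- Let Y be a random variable taking values in a finite set S with P(Y = y) > 0 and P(Y = y, G = 1) > 0 and P(Y = y, G = 0) > 0 for every y ∈ S. Then the weighted sum of imbalance, δ_B := Σ_{y∈S} (E[Z | Y = y, G = 1] − E[Z | Y = y, G = 0]) · Var(G | Y = y) · P(Y = y), equals the expected conditional covariance E[Cov(Z, G | Y)] = E[Z·G] − E[ E[Z | σ(Y)] · E[G | σ(Y)] ]. -/
open MeasureTheory ProbabilityTheory

/-!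
Since `Y` takes finitely many values, `E[X | σ(Y)]` is the atom-wise average
`ω ↦ E[X | Y = Y ω]`, so both sides split into sums over the atoms `{Y = y}`. On an atom `A`,
split by `G` into `A₁ = A ∩ {G = 1}` and `A₀ = A ∩ {G = 0}` with `aᵢ = ∫_{Aᵢ} Z` and
`pᵢ = P(Aᵢ)`, both summands equal `(a₁ p₀ - a₀ p₁) / (p₁ + p₀)`.
-/

/-- Conditional expectation of `X` given an event `A`: `E[X | A] = E[X·1_A] / P(A)`. -/
noncomputable def condExpEvent {Ω : Type*} [MeasurableSpace Ω] (P : Measure Ω)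
    (X : Ω → ℝ) (A : Set Ω) : ℝ :=
  (∫ ω in A, X ω ∂P) / (P A).toReal

/-- Conditional variance of a {0,1}-valued `G` given an event `A`:
`Var(G | A) = E[G | A]·(1 − E[G | A])`. -/
noncomputable def condVarEvent {Ω : Type*} [MeasurableSpace Ω] (P : Measure Ω)
    (G : Ω → ℝ) (A : Set Ω) : ℝ :=
  condExpEvent P G A * (1 - condExpEvent P G A)

section Fibers

variable {Ω β : Type*} [MeasurableSpace β] [MeasurableSingletonClass β] {Y : Ω → β} {S : Finset β}

lemma measurable_comap_comp_of_forall_mem {γ : Type*} [MeasurableSpace γ]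
    (hYS : ∀ ω, Y ω ∈ S) (c : β → γ) :
    Measurable[MeasurableSpace.comap Y inferInstance] fun ω => c (Y ω) := by
  intro U _
  refine ⟨c ⁻¹' U ∩ S, (S.finite_toSet.subset Set.inter_subset_right).measurableSet, ?_⟩
  ext ω
  simp [hYS ω]

variable [MeasurableSpace Ω]

lemma integrable_comp_of_forall_mem (μ : Measure Ω) [IsFiniteMeasure μ] (hY : Measurable Y)
    (hYS : ∀ ω, Y ω ∈ S) (c : β → ℝ) : Integrable (fun ω => c (Y ω)) μ :=
  Integrable.of_bound
    ((measurable_comap_comp_of_forall_mem hYS c).mono hY.comap_le le_rfl).aestronglyMeasurable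
    (∑ y ∈ S, ‖c y‖)
    (ae_of_all _ fun ω => Finset.single_le_sum (f := fun y => ‖c y‖)
      (fun _ _ => norm_nonneg _) (hYS ω))

lemma setIntegral_preimage_eq_sum_setIntegral_fiber (μ : Measure Ω) (hY : Measurable Y)
    (hYS : ∀ ω, Y ω ∈ S) {X : Ω → ℝ} (hX : Integrable X μ) (t : Set β)
    [DecidablePred (· ∈ t)] :
    ∫ ω in Y ⁻¹' t, X ω ∂μ = ∑ y ∈ S with y ∈ t, ∫ ω in {ω | Y ω = y}, X ω ∂μ := by
  have hcover : Y ⁻¹' t = ⋃ y ∈ S.filter (· ∈ t), {ω | Y ω = y} := by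
    ext ω
    simp [hYS ω]
  rw [hcover, integral_biUnion_finset (s := fun y => {ω | Y ω = y}) _
    (fun y _ => hY (measurableSet_singleton y)) ?_ (fun _ _ => hX.integrableOn)]
  intro y _ z _ hyz
  exact Set.disjoint_left.2 fun ω hy hz => hyz (hy.symm.trans hz)

lemma integral_eq_sum_setIntegral_fiber (μ : Measure Ω) (hY : Measurable Y)
    (hYS : ∀ ω, Y ω ∈ S) {X : Ω → ℝ} (hX : Integrable X μ) :
    ∫ ω, X ω ∂μ = ∑ y ∈ S, ∫ ω in {ω | Y ω = y}, X ω ∂μ := by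
  simpa using setIntegral_preimage_eq_sum_setIntegral_fiber μ hY hYS hX Set.univ

lemma setIntegral_fiber_comp (μ : Measure Ω) (hY : Measurable Y) (c : β → ℝ) (y : β) :
    ∫ ω in {ω | Y ω = y}, c (Y ω) ∂μ = μ.real {ω | Y ω = y} * c y := by
  rw [setIntegral_congr_fun (s := {ω | Y ω = y}) (hY (measurableSet_singleton y))
    fun ω (hω : Y ω = y) => congrArg c hω, setIntegral_const, smul_eq_mul]

end Fibers

section CondExpEvent

variable {Ω : Type*} [MeasurableSpace Ω]

lemma measureReal_mul_condExpEvent (P : Measure Ω) [IsFiniteMeasure P] (X : Ω → ℝ)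
    (A : Set Ω) : P.real A * condExpEvent P X A = ∫ ω in A, X ω ∂P := by
  rcases eq_or_ne (P A) 0 with hA | hA
  · simp [setIntegral_measure_zero _ hA, measureReal_def, hA]
  · exact mul_div_cancel₀ _ (ENNReal.toReal_ne_zero.2 ⟨hA, measure_ne_top P A⟩)

theorem condExp_comap_ae_eq_condExpEvent {β : Type*} [MeasurableSpace β]
    [MeasurableSingletonClass β] {Y : Ω → β} {S : Finset β} (P : Measure Ω) [IsFiniteMeasure P]
    (hY : Measurable Y) (hYS : ∀ ω, Y ω ∈ S) {X : Ω → ℝ} (hX : Integrable X P) :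
    P[X | MeasurableSpace.comap Y inferInstance] =ᵐ[P]
      fun ω => condExpEvent P X {ω' | Y ω' = Y ω} := by
  set c : β → ℝ := fun y => condExpEvent P X {ω' | Y ω' = y}
  have hc := integrable_comp_of_forall_mem P hY hYS c
  refine (ae_eq_condExp_of_forall_setIntegral_eq hY.comap_le hX (fun _ _ _ => hc.integrableOn)
    ?_ (measurable_comap_comp_of_forall_mem hYS c).stronglyMeasurable.aestronglyMeasurable).symm
  rintro _ ⟨t, -, rfl⟩ -
  classical
  rw [setIntegral_preimage_eq_sum_setIntegral_fiber P hY hYS hc,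
    setIntegral_preimage_eq_sum_setIntegral_fiber P hY hYS hX]
  refine Finset.sum_congr rfl fun y _ => ?_
  rw [setIntegral_fiber_comp P hY c, measureReal_mul_condExpEvent]

end CondExpEvent

section ZeroOneValued

variable {Ω : Type*} {G : Ω → ℝ}

lemma mul_eq_indicator_of_forall_eq_zero_or_one (hG01 : ∀ ω, G ω = 0 ∨ G ω = 1)
    (Z : Ω → ℝ) : (fun ω => Z ω * G ω) = {ω | G ω = 1}.indicator Z := by
  funext ω
  rcases hG01 ω with h | h <;> simp [h]

lemma setOf_eq_zero_eq_compl_of_forall_eq_zero_or_one (hG01 : ∀ ω, G ω = 0 ∨ G ω = 1) :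
    {ω | G ω = 0} = {ω | G ω = 1}ᶜ := by
  ext ω
  rcases hG01 ω with h | h <;> simp [h]

/-- The right-hand side is `P(A)·Cov(Z, G | A)`. -/
theorem condExpEvent_sub_mul_condVarEvent_mul_measureReal [MeasurableSpace Ω] (P : Measure Ω)
    [IsFiniteMeasure P] (hG : Measurable G) (hG01 : ∀ ω, G ω = 0 ∨ G ω = 1) {Z : Ω → ℝ}
    (hZ : Integrable Z P) {A : Set Ω} (h1 : 0 < P (A ∩ {ω | G ω = 1}))
    (h0 : 0 < P (A ∩ {ω | G ω = 0})) :
    (condExpEvent P Z (A ∩ {ω | G ω = 1}) - condExpEvent P Z (A ∩ {ω | G ω = 0})) *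
        condVarEvent P G A * P.real A
      = ∫ ω in A, Z ω * G ω ∂P - P.real A * (condExpEvent P Z A * condExpEvent P G A) := by
  rw [setOf_eq_zero_eq_compl_of_forall_eq_zero_or_one hG01, ← Set.sdiff_eq] at h0 ⊢
  set B := {ω | G ω = 1}
  have hB : MeasurableSet B := hG (measurableSet_singleton 1)
  have hZG : ∫ ω in A, Z ω * G ω ∂P = ∫ ω in A ∩ B, Z ω ∂P := by
    rw [mul_eq_indicator_of_forall_eq_zero_or_one hG01, setIntegral_indicator hB]
  have hGA : ∫ ω in A, G ω ∂P = P.real (A ∩ B) := by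
    have hG1 := mul_eq_indicator_of_forall_eq_zero_or_one hG01 fun _ => 1
    simp only [one_mul] at hG1
    rw [hG1, setIntegral_indicator hB, setIntegral_const, smul_eq_mul, mul_one]
  have hZA := (integral_inter_add_sdiff hB hZ.integrableOn (s := A)).symm
  have hPA := (measureReal_inter_add_sdiff hB (μ := P) (s := A)).symm
  have hp1 : 0 < P.real (A ∩ B) := ENNReal.toReal_pos h1.ne' (measure_ne_top P _)
  have hp0 : 0 < P.real (A \ B) := ENNReal.toReal_pos h0.ne' (measure_ne_top P _)
  simp only [condVarEvent, condExpEvent, ← measureReal_def, hZG, hGA]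
  rw [hZA, hPA]
  field_simp
  ring

end ZeroOneValued

theorem stmt0_general {Ω : Type*} [MeasurableSpace Ω] (P : Measure Ω) [IsProbabilityMeasure P]
    (Y Z G : Ω → ℝ) (hYm : Measurable Y) (hGm : Measurable G)
    (hZ2 : MemLp Z 2 P) (hG01 : ∀ ω, G ω = 0 ∨ G ω = 1)
    (S : Finset ℝ) (hYS : ∀ ω, Y ω ∈ S)
    (hpos1 : ∀ y ∈ S, 0 < P ({ω | Y ω = y} ∩ {ω | G ω = 1}))
    (hpos0 : ∀ y ∈ S, 0 < P ({ω | Y ω = y} ∩ {ω | G ω = 0})) :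
    ∑ y ∈ S,
        (condExpEvent P Z ({ω | Y ω = y} ∩ {ω | G ω = 1}) -
          condExpEvent P Z ({ω | Y ω = y} ∩ {ω | G ω = 0})) *
        condVarEvent P G {ω | Y ω = y} * (P {ω | Y ω = y}).toReal
      = ∫ ω, Z ω * G ω ∂P -
        ∫ ω, (P[Z | MeasurableSpace.comap Y inferInstance]) ω *
          (P[G | MeasurableSpace.comap Y inferInstance]) ω ∂P := by
  have hZ : Integrable Z P := hZ2.integrable one_le_two
  have hG : Integrable G P := Integrable.of_bound hGm.aestronglyMeasurable 1 <|
    ae_of_all _ fun ω => by rcases hG01 ω with h | h <;> simp [h]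
  have hZG : Integrable (fun ω => Z ω * G ω) P := by
    rw [mul_eq_indicator_of_forall_eq_zero_or_one hG01]
    exact hZ.indicator (hGm (measurableSet_singleton 1))
  set c : ℝ → ℝ := fun y =>
    condExpEvent P Z {ω | Y ω = y} * condExpEvent P G {ω | Y ω = y}
  have hcondExp : (fun ω => (P[Z | MeasurableSpace.comap Y inferInstance]) ω *
      (P[G | MeasurableSpace.comap Y inferInstance]) ω) =ᵐ[P] fun ω => c (Y ω) :=
    (condExp_comap_ae_eq_condExpEvent P hYm hYS hZ).mul
      (condExp_comap_ae_eq_condExpEvent P hYm hYS hG)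
  rw [integral_congr_ae hcondExp, integral_eq_sum_setIntegral_fiber P hYm hYS hZG,
    integral_eq_sum_setIntegral_fiber P hYm hYS (integrable_comp_of_forall_mem P hYm hYS c),
    ← Finset.sum_sub_distrib]
  refine Finset.sum_congr rfl fun y hy => ?_
  rw [setIntegral_fiber_comp P hYm c]
  exact condExpEvent_sub_mul_condVarEvent_mul_measureReal P hGm hG01 hZ (hpos1 y hy)
    (hpos0 y hy)

/-- For `Y` taking values in a finite set `S` with all the relevant events
having positive probability, the weighted sum of imbalance
`δ_B = Σ_{y∈S} (E[Z|Y=y,G=1] − E[Z|Y=y,G=0])·Var(G|Y=y)·P(Y=y)` equals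
`E[Cov(Z,G|Y)] = E[Z·G] − E[E[Z|σ(Y)]·E[G|σ(Y)]]`. -/
theorem stmt0 {Ω : Type*} [MeasurableSpace Ω] (P : Measure Ω) [IsProbabilityMeasure P]
    (Y Z G : Ω → ℝ) (hYm : Measurable Y) (hZm : Measurable Z) (hGm : Measurable G)
    (hZ2 : MemLp Z 2 P) (hG01 : ∀ ω, G ω = 0 ∨ G ω = 1)
    (S : Finset ℝ) (hYS : ∀ ω, Y ω ∈ S)
    (hpos : ∀ y ∈ S, 0 < P {ω | Y ω = y})
    (hpos1 : ∀ y ∈ S, 0 < P ({ω | Y ω = y} ∩ {ω | G ω = 1}))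
    (hpos0 : ∀ y ∈ S, 0 < P ({ω | Y ω = y} ∩ {ω | G ω = 0})) :
    ∑ y ∈ S,
        (condExpEvent P Z ({ω | Y ω = y} ∩ {ω | G ω = 1}) -
          condExpEvent P Z ({ω | Y ω = y} ∩ {ω | G ω = 0})) *
        condVarEvent P G {ω | Y ω = y} * (P {ω | Y ω = y}).toReal
      = ∫ ω, Z ω * G ω ∂P -
        ∫ ω, (P[Z | MeasurableSpace.comap Y inferInstance]) ω *
          (P[G | MeasurableSpace.comap Y inferInstance]) ω ∂P :=
  stmt0_general P Y Z G hYm hGm hZ2 hG01 S hYS hpos1 hpos0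
end

section
/- Suppose Y is {0,1}-valued, Z is globally calibrated (E[Y | σ(Z)] = Z almost surely), and P(Y = y, G = g) > 0 for all y, g ∈ {0,1}. Then δ_B(0)·ω_Y(0) + δ_B(1)·ω_Y(1) + δ_C = MSE(Z) · (P(G = 1 | Y = 1) − P(G = 1 | Y = 0)), where δ_B(y) := E[Z | Y = y, G = 1] − E[Z | Y = y, G = 0], ω_Y(y) := Var(G | Y = y) · P(Y = y), δ_C := E[Y·G] − E[ E[Y | σ(Z)] · E[G | σ(Z)] ], and MSE(Z) := E[(Y − Z)²]. -/
open MeasureTheory ProbabilityTheory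

/-- Conditional probability of `B` given `A`: `P(B | A) = P(B ∩ A)/P(A)`. -/
noncomputable def condProbEvent {Ω : Type*} [MeasurableSpace Ω] (P : Measure Ω)
    (B A : Set Ω) : ℝ :=
  (P (B ∩ A)).toReal / (P A).toReal

/-!
Calibration gives `E[Z] = E[Y]`, and pulling the `σ(Z)`-measurable factor `Z` out of conditional
expectations gives `E[Z²] = E[ZY]` and `E[E[Y|Z]·E[G|Z]] = E[ZG]`; hence `MSE(Z) = E[Y²] − E[ZY]`.
For binary `Y` and `G` every term of the identity is then a rational expression in the four cell
probabilities `p_yg = P(Y = y, G = g)` and cell integrals `I_yg = E[Z; Y = y, G = g]`, and the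
identity becomes an algebraic one after eliminating `I_00` through `E[Z] = E[Y]`.
-/

section Binary

variable {Ω : Type*} {G : Ω → ℝ}

lemma setOf_eq_zero_eq_compl_of_binary (hG : ∀ ω, G ω = 0 ∨ G ω = 1) :
    {ω | G ω = 0} = {ω | G ω = 1}ᶜ := by
  ext ω
  rcases hG ω with h | h <;> simp [h]

lemma eq_indicator_one_of_binary (hG : ∀ ω, G ω = 0 ∨ G ω = 1) :
    G = {ω | G ω = 1}.indicator 1 := by
  ext ω
  rcases hG ω with h | h <;> simp [h]

lemma mul_eq_indicator_of_binary (hG : ∀ ω, G ω = 0 ∨ G ω = 1) (f : Ω → ℝ) :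
    (fun ω => f ω * G ω) = {ω | G ω = 1}.indicator f := by
  ext ω
  rcases hG ω with h | h <;> simp [h]

variable [MeasurableSpace Ω] {μ : Measure Ω}

lemma integral_mul_of_binary (hGm : Measurable G) (hG : ∀ ω, G ω = 0 ∨ G ω = 1)
    (f : Ω → ℝ) : ∫ ω, f ω * G ω ∂μ = ∫ ω in {ω | G ω = 1}, f ω ∂μ := by
  rw [mul_eq_indicator_of_binary hG, integral_indicator (measurableSet_eq_fun hGm measurable_const)]

lemma setIntegral_of_binary (hGm : Measurable G) (hG : ∀ ω, G ω = 0 ∨ G ω = 1)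
    (s : Set Ω) : ∫ ω in s, G ω ∂μ = μ.real (s ∩ {ω | G ω = 1}) := by
  rw [integral_congr_ae (ae_of_all _ (congrFun (eq_indicator_one_of_binary hG))),
    setIntegral_indicator (measurableSet_eq_fun hGm measurable_const)]
  simp

lemma integral_of_binary (hGm : Measurable G) (hG : ∀ ω, G ω = 0 ∨ G ω = 1) :
    ∫ ω, G ω ∂μ = μ.real {ω | G ω = 1} := by
  simpa using setIntegral_of_binary (μ := μ) hGm hG Set.univ

lemma integrable_of_binary [IsFiniteMeasure μ] (hGm : Measurable G)
    (hG : ∀ ω, G ω = 0 ∨ G ω = 1) : Integrable G μ := by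
  rw [eq_indicator_one_of_binary hG]
  exact (integrable_const 1).indicator (measurableSet_eq_fun hGm measurable_const)

lemma integrable_mul_of_binary (hGm : Measurable G) (hG : ∀ ω, G ω = 0 ∨ G ω = 1)
    {f : Ω → ℝ} (hf : Integrable f μ) : Integrable (fun ω => f ω * G ω) μ := by
  rw [mul_eq_indicator_of_binary hG]
  exact hf.indicator (measurableSet_eq_fun hGm measurable_const)

lemma setIntegral_eq_add_of_binary (hGm : Measurable G) (hG : ∀ ω, G ω = 0 ∨ G ω = 1)
    {f : Ω → ℝ} {s : Set Ω} (hf : IntegrableOn f s μ) :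
    ∫ ω in s, f ω ∂μ = ∫ ω in s ∩ {ω | G ω = 0}, f ω ∂μ + ∫ ω in s ∩ {ω | G ω = 1}, f ω ∂μ := by
  rw [setOf_eq_zero_eq_compl_of_binary hG, ← Set.sdiff_eq, add_comm,
    integral_inter_add_sdiff (measurableSet_eq_fun hGm measurable_const) hf]

lemma measureReal_eq_add_of_binary [IsFiniteMeasure μ] (hGm : Measurable G)
    (hG : ∀ ω, G ω = 0 ∨ G ω = 1) (s : Set Ω) :
    μ.real s = μ.real (s ∩ {ω | G ω = 0}) + μ.real (s ∩ {ω | G ω = 1}) := by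
  rw [setOf_eq_zero_eq_compl_of_binary hG, ← Set.sdiff_eq, add_comm,
    measureReal_inter_add_sdiff (measurableSet_eq_fun hGm measurable_const)]

lemma integral_eq_sum_cells_of_binary {Y : Ω → ℝ} (hYm : Measurable Y)
    (hY : ∀ ω, Y ω = 0 ∨ Y ω = 1) (hGm : Measurable G) (hG : ∀ ω, G ω = 0 ∨ G ω = 1)
    {f : Ω → ℝ} (hf : Integrable f μ) :
    ∫ ω, f ω ∂μ =
      ∫ ω in {ω | Y ω = 0} ∩ {ω | G ω = 0}, f ω ∂μ + ∫ ω in {ω | Y ω = 0} ∩ {ω | G ω = 1}, f ω ∂μ +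
        (∫ ω in {ω | Y ω = 1} ∩ {ω | G ω = 0}, f ω ∂μ +
          ∫ ω in {ω | Y ω = 1} ∩ {ω | G ω = 1}, f ω ∂μ) := by
  rw [← setIntegral_eq_add_of_binary hGm hG hf.integrableOn,
    ← setIntegral_eq_add_of_binary hGm hG hf.integrableOn, setOf_eq_zero_eq_compl_of_binary hY,
    add_comm, integral_add_compl (measurableSet_eq_fun hYm measurable_const) hf]

end Binary

section Calibration

variable {Ω : Type*} {m mΩ : MeasurableSpace Ω} {μ : Measure Ω} [IsFiniteMeasure μ]
  {Y Z : Ω → ℝ}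

lemma integral_mul_condExp_of_stronglyMeasurable (hm : m ≤ mΩ) {f g : Ω → ℝ}
    (hf : StronglyMeasurable[m] f) (hfg : Integrable (f * g) μ) (hg : Integrable g μ) :
    ∫ ω, f ω * μ[g | m] ω ∂μ = ∫ ω, f ω * g ω ∂μ :=
  calc ∫ ω, f ω * μ[g | m] ω ∂μ = ∫ ω, μ[f * g | m] ω ∂μ :=
        integral_congr_ae (condExp_mul_of_stronglyMeasurable_left hf hfg hg).symm
    _ = ∫ ω, f ω * g ω ∂μ := integral_condExp hm

variable (hm : m ≤ mΩ) (hZ : StronglyMeasurable[m] Z) (hcal : μ[Y | m] =ᵐ[μ] Z)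
include hm hcal

lemma integral_eq_of_calibrated : ∫ ω, Z ω ∂μ = ∫ ω, Y ω ∂μ :=
  (integral_congr_ae hcal).symm.trans (integral_condExp hm)

include hZ

lemma integral_condExp_mul_condExp_of_calibrated {G : Ω → ℝ} (hG : Integrable G μ)
    (hZG : Integrable (Z * G) μ) :
    ∫ ω, μ[Y | m] ω * μ[G | m] ω ∂μ = ∫ ω, Z ω * G ω ∂μ :=
  calc ∫ ω, μ[Y | m] ω * μ[G | m] ω ∂μ = ∫ ω, Z ω * μ[G | m] ω ∂μ :=
        integral_congr_ae (hcal.mono fun ω h => by simp only [h])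
    _ = ∫ ω, Z ω * G ω ∂μ := integral_mul_condExp_of_stronglyMeasurable hm hZ hZG hG

lemma integral_sub_sq_of_calibrated (hY : MemLp Y 2 μ) (hZ2 : MemLp Z 2 μ) :
    ∫ ω, (Y ω - Z ω) ^ 2 ∂μ = ∫ ω, Y ω ^ 2 ∂μ - ∫ ω, Z ω * Y ω ∂μ := by
  have hZY : Integrable (fun ω => Z ω * Y ω) μ := hZ2.integrable_mul hY
  have hsq : ∫ ω, Z ω ^ 2 ∂μ = ∫ ω, Z ω * Y ω ∂μ :=
    calc ∫ ω, Z ω ^ 2 ∂μ = ∫ ω, Z ω * μ[Y | m] ω ∂μ :=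
          integral_congr_ae (hcal.mono fun ω h => by simp [h, sq])
      _ = ∫ ω, Z ω * Y ω ∂μ :=
          integral_mul_condExp_of_stronglyMeasurable hm hZ hZY (hY.integrable one_le_two)
  have hexp : ∀ ω, (Y ω - Z ω) ^ 2 = Y ω ^ 2 - 2 * (Z ω * Y ω) + Z ω ^ 2 := fun ω => by ring
  simp_rw [hexp]
  rw [integral_add (f := fun ω => Y ω ^ 2 - 2 * (Z ω * Y ω))
      (hY.integrable_sq.sub (hZY.const_mul 2)) hZ2.integrable_sq,
    integral_sub hY.integrable_sq (hZY.const_mul 2), integral_const_mul, hsq]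
  ring

end Calibration

lemma accounting_identity_of_cells {p00 p01 p10 p11 I00 I01 I10 I11 : ℝ}
    (h00 : 0 < p00) (h01 : 0 < p01) (h10 : 0 < p10) (h11 : 0 < p11)
    (hmean : I00 + I01 + (I10 + I11) = p10 + p11) :
    (I01 / p01 - I00 / p00) * (p01 / (p00 + p01) * (1 - p01 / (p00 + p01)) * (p00 + p01)) +
      (I11 / p11 - I10 / p10) * (p11 / (p10 + p11) * (1 - p11 / (p10 + p11)) * (p10 + p11)) +
      (p11 - (I01 + I11)) =
      (p10 + p11 - (I10 + I11)) * (p11 / (p10 + p11) - p01 / (p00 + p01)) := by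
  have hI00 : I00 = p10 + p11 - I01 - I10 - I11 := by linarith
  subst hI00
  field_simp
  ring

/-- **accounting identity, binary outcome.** If `Y` is {0,1}-valued,
`Z` is globally calibrated, and all outcome-by-group events have positive probability, then
`δ_B(0)·ω_Y(0) + δ_B(1)·ω_Y(1) + δ_C = MSE(Z)·(P(G=1|Y=1) − P(G=1|Y=0))`. -/
theorem stmt3 {Ω : Type*} [MeasurableSpace Ω] (P : Measure Ω) [IsProbabilityMeasure P]
    (Y Z G : Ω → ℝ) (hYm : Measurable Y) (hZm : Measurable Z) (hGm : Measurable G)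
    (hY2 : MemLp Y 2 P) (hZ2 : MemLp Z 2 P)
    (hY01 : ∀ ω, Y ω = 0 ∨ Y ω = 1) (hG01 : ∀ ω, G ω = 0 ∨ G ω = 1)
    (hcal : P[Y | MeasurableSpace.comap Z inferInstance] =ᵐ[P] Z)
    (hpos : ∀ y ∈ ({0, 1} : Set ℝ), ∀ g ∈ ({0, 1} : Set ℝ),
      0 < P ({ω | Y ω = y} ∩ {ω | G ω = g})) :
    (condExpEvent P Z ({ω | Y ω = 0} ∩ {ω | G ω = 1}) -
        condExpEvent P Z ({ω | Y ω = 0} ∩ {ω | G ω = 0})) *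
      (condVarEvent P G {ω | Y ω = 0} * (P {ω | Y ω = 0}).toReal) +
    (condExpEvent P Z ({ω | Y ω = 1} ∩ {ω | G ω = 1}) -
        condExpEvent P Z ({ω | Y ω = 1} ∩ {ω | G ω = 0})) *
      (condVarEvent P G {ω | Y ω = 1} * (P {ω | Y ω = 1}).toReal) +
    (∫ ω, Y ω * G ω ∂P -
      ∫ ω, (P[Y | MeasurableSpace.comap Z inferInstance]) ω *
        (P[G | MeasurableSpace.comap Z inferInstance]) ω ∂P)
      = (∫ ω, (Y ω - Z ω) ^ 2 ∂P) *
        (condProbEvent P {ω | G ω = 1} {ω | Y ω = 1} -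
          condProbEvent P {ω | G ω = 1} {ω | Y ω = 0}) := by
  have hm := hZm.comap_le
  have hZ := (comap_measurable (m := inferInstance) Z).stronglyMeasurable
  have hZi : Integrable Z P := hZ2.integrable one_le_two
  have hcell (y : ℝ) (hy : y ∈ ({0, 1} : Set ℝ)) (g : ℝ) (hg : g ∈ ({0, 1} : Set ℝ)) :
      0 < P.real ({ω | Y ω = y} ∩ {ω | G ω = g}) :=
    ENNReal.toReal_pos (hpos y hy g hg).ne' (measure_ne_top _ _)
  have hmean := integral_eq_of_calibrated hm hcal
  rw [integral_eq_sum_cells_of_binary hYm hY01 hGm hG01 hZi,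
    integral_of_binary hYm hY01, measureReal_eq_add_of_binary hGm hG01] at hmean
  unfold condVarEvent condExpEvent condProbEvent
  simp only [← measureReal_def]
  rw [integral_condExp_mul_condExp_of_calibrated hm hZ hcal (integrable_of_binary hGm hG01)
      (integrable_mul_of_binary hGm hG01 hZi),
    integral_sub_sq_of_calibrated hm hZ hcal hY2 hZ2]
  simp only [sq, integral_mul_of_binary hYm hY01, integral_mul_of_binary hGm hG01,
    setIntegral_of_binary hYm hY01, setIntegral_of_binary hGm hG01, Set.inter_self]
  rw [setIntegral_eq_add_of_binary hGm hG01 (s := {ω | Y ω = 1}) hZi.integrableOn,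
    setIntegral_eq_add_of_binary hYm hY01 (s := {ω | G ω = 1}) hZi.integrableOn,
    measureReal_eq_add_of_binary hGm hG01 {ω | Y ω = 0},
    measureReal_eq_add_of_binary hGm hG01 {ω | Y ω = 1},
    Set.inter_comm {ω | G ω = 1} {ω | Y ω = 0}, Set.inter_comm {ω | G ω = 1} {ω | Y ω = 1}]
  exact accounting_identity_of_cells (hcell 0 (.inl rfl) 0 (.inl rfl))
    (hcell 0 (.inl rfl) 1 (.inr rfl)) (hcell 1 (.inr rfl) 0 (.inl rfl))
    (hcell 1 (.inr rfl) 1 (.inr rfl)) hmean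
end

section
/- Suppose Z is globally calibrated: E[Y | σ(Z)] = Z almost surely. Then |δ_B + δ_C| ≤ √Var(E[G | σ(Y)]) · √Var(Y − E[Z | σ(Y)]) ≤ √Var(E[G | σ(Y)]) · √E[(Y − Z)²], where δ_B := E[Z·G] − E[ E[Z | σ(Y)] · E[G | σ(Y)] ], δ_C := E[Y·G] − E[ E[Y | σ(Z)] · E[G | σ(Z)] ], and Var(U) := E[U²] − (E[U])². -/
/-!
The pull-out property of conditional expectation turns `E[Z·G]` and `E[Y·G]` into
`E[Z·E[G|σ(Z)]]` and `E[Y·E[G|σ(Y)]]`, and `E[E[Z|σ(Y)]·E[G|σ(Y)]]` into `E[Z·E[G|σ(Y)]]`;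
calibration cancels the `σ(Z)` terms, so `δ_B + δ_C = E[(Y - E[Z|σ(Y)])·E[G|σ(Y)]]`.
Calibration also gives `E[Y] = E[Z]`, so `Y - E[Z|σ(Y)]` is centred and this is a covariance,
bounded by Cauchy–Schwarz. Finally `Y - E[Z|σ(Y)] = E[Y - Z|σ(Y)]`, and conditioning does not
increase variance (law of total variance).
-/

open MeasureTheory ProbabilityTheory

section

variable {Ω : Type*} {m m₀ : MeasurableSpace Ω} {μ : Measure Ω}

lemma abs_integral_mul_le_sqrt_mul_sqrt {f g : Ω → ℝ} (hf : MemLp f 2 μ) (hg : MemLp g 2 μ) :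
    |∫ x, f x * g x ∂μ| ≤ √(∫ x, f x ^ 2 ∂μ) * √(∫ x, g x ^ 2 ∂μ) := by
  have hL : ∀ h : Ω → ℝ, ∫ x, ‖h x‖ ^ (2 : ℝ) ∂μ = ∫ x, h x ^ 2 ∂μ := fun h ↦
    integral_congr_ae (ae_of_all _ fun x ↦ by simp)
  have holder := integral_mul_norm_le_Lp_mul_Lq (p := 2) (q := 2) .two_two
    (by simpa using hf) (by simpa using hg)
  rw [hL, hL, ← Real.sqrt_eq_rpow, ← Real.sqrt_eq_rpow] at holder
  calc |∫ x, f x * g x ∂μ| ≤ ∫ x, |f x * g x| ∂μ := abs_integral_le_integral_abs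
    _ = ∫ x, ‖f x‖ * ‖g x‖ ∂μ := by simp [abs_mul]
    _ ≤ _ := holder

lemma abs_covariance_le_sqrt_variance_mul_sqrt_variance [IsProbabilityMeasure μ] {X Y : Ω → ℝ}
    (hX : MemLp X 2 μ) (hY : MemLp Y 2 μ) :
    |cov[X, Y; μ]| ≤ √Var[X; μ] * √Var[Y; μ] := by
  rw [variance_eq_integral hX.aemeasurable, variance_eq_integral hY.aemeasurable]
  exact abs_integral_mul_le_sqrt_mul_sqrt (hX.sub (memLp_const _)) (hY.sub (memLp_const _))

lemma variance_condExp_le (hm : m ≤ m₀) [IsProbabilityMeasure μ] {X : Ω → ℝ}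
    (hX : MemLp X 2 μ) : Var[μ[X|m]; μ] ≤ Var[X; μ] := by
  rw [← integral_condVar_add_variance_condExp hm hX, le_add_iff_nonneg_left]
  exact integral_nonneg_of_ae (condExp_nonneg (ae_of_all _ fun _ ↦ sq_nonneg _))

lemma integral_mul_condExp (hm : m ≤ m₀) [IsFiniteMeasure μ] {f g : Ω → ℝ}
    (hf : StronglyMeasurable[m] f) (hf2 : MemLp f 2 μ) (hg2 : MemLp g 2 μ) :
    ∫ x, f x * μ[g|m] x ∂μ = ∫ x, f x * g x ∂μ := by
  calc ∫ x, f x * μ[g|m] x ∂μ = ∫ x, μ[f * g|m] x ∂μ :=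
        integral_congr_ae (condExp_mul_of_stronglyMeasurable_left hf
          (hf2.integrable_mul hg2) (hg2.integrable one_le_two)).symm
    _ = ∫ x, f x * g x ∂μ := integral_condExp hm

lemma variance_sub_condExp_le (hm : m ≤ m₀) [IsProbabilityMeasure μ] {Y Z : Ω → ℝ}
    (hYm : StronglyMeasurable[m] Y) (hY : MemLp Y 2 μ) (hZ : MemLp Z 2 μ) :
    Var[Y - μ[Z|m]; μ] ≤ ∫ x, (Y x - Z x) ^ 2 ∂μ := by
  have hproj : Y - μ[Z|m] =ᵐ[μ] μ[Y - Z|m] := by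
    have hYY : μ[Y|m] = Y := condExp_of_stronglyMeasurable hm hYm (hY.integrable one_le_two)
    simpa [hYY] using (condExp_sub (hY.integrable one_le_two) (hZ.integrable one_le_two) m).symm
  calc Var[Y - μ[Z|m]; μ] = Var[μ[Y - Z|m]; μ] := variance_congr hproj
    _ ≤ Var[Y - Z; μ] := variance_condExp_le hm (hY.sub hZ)
    _ ≤ ∫ x, (Y x - Z x) ^ 2 ∂μ := variance_le_expectation_sq (hY.sub hZ).aestronglyMeasurable

lemma budget_eq_covariance_of_calibrated {mY mZ : MeasurableSpace Ω} (hmY : mY ≤ m₀)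
    (hmZ : mZ ≤ m₀) [IsProbabilityMeasure μ] {Y Z G : Ω → ℝ} (hYm : StronglyMeasurable[mY] Y)
    (hZm : StronglyMeasurable[mZ] Z) (hY : MemLp Y 2 μ) (hZ : MemLp Z 2 μ) (hG : MemLp G 2 μ)
    (hcal : μ[Y|mZ] =ᵐ[μ] Z) :
    ((∫ x, Z x * G x ∂μ) - ∫ x, μ[Z|mY] x * μ[G|mY] x ∂μ) +
        ((∫ x, Y x * G x ∂μ) - ∫ x, μ[Y|mZ] x * μ[G|mZ] x ∂μ) =
      cov[Y - μ[Z|mY], μ[G|mY]; μ] := by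
  have hZY : MemLp (μ[Z|mY]) 2 μ := hZ.condExp one_le_two
  have hGY : MemLp (μ[G|mY]) 2 μ := hG.condExp one_le_two
  have hZG := integral_mul_condExp hmZ hZm hZ hG
  have hYG := integral_mul_condExp hmY hYm hY hG
  have hZYGY := integral_mul_condExp hmY stronglyMeasurable_condExp hGY hZ
  simp only [mul_comm (μ[G|mY] _)] at hZYGY
  have hcalG : ∫ x, μ[Y|mZ] x * μ[G|mZ] x ∂μ = ∫ x, Z x * μ[G|mZ] x ∂μ :=
    integral_congr_ae (hcal.mono fun x hx ↦ by simp only [hx])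
  have hmean : μ[Y - μ[Z|mY]] = 0 := by
    rw [integral_sub' (hY.integrable one_le_two) integrable_condExp, integral_condExp hmY,
      ← integral_condExp hmZ, integral_congr_ae hcal, sub_self]
  rw [covariance_eq_sub (hY.sub hZY) hGY, hmean, zero_mul, sub_zero, sub_mul, integral_sub' (hY.integrable_mul hGY) (hZY.integrable_mul hGY)]
  simp only [Pi.mul_apply]
  linarith

end

/-- **accuracy bounds the budget.** If `Z` is globally calibrated, then
`|δ_B + δ_C| ≤ √Var(E[G|σ(Y)])·√Var(Y − E[Z|σ(Y)]) ≤ √Var(E[G|σ(Y)])·√E[(Y − Z)²]`,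
where `δ_B = E[Z·G] − E[E[Z|σ(Y)]·E[G|σ(Y)]]`, `δ_C = E[Y·G] − E[E[Y|σ(Z)]·E[G|σ(Z)]]`,
and `Var(U) = E[U²] − (E[U])²`. -/
theorem stmt8 {Ω : Type*} [MeasurableSpace Ω] (P : Measure Ω) [IsProbabilityMeasure P]
    (Y Z G : Ω → ℝ) (hYm : Measurable Y) (hZm : Measurable Z) (hGm : Measurable G)
    (hY2 : MemLp Y 2 P) (hZ2 : MemLp Z 2 P) (hG01 : ∀ ω, G ω = 0 ∨ G ω = 1)
    (hcal : P[Y | MeasurableSpace.comap Z inferInstance] =ᵐ[P] Z) :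
    |((∫ ω, Z ω * G ω ∂P) -
        ∫ ω, (P[Z | MeasurableSpace.comap Y inferInstance]) ω *
          (P[G | MeasurableSpace.comap Y inferInstance]) ω ∂P) +
      ((∫ ω, Y ω * G ω ∂P) -
        ∫ ω, (P[Y | MeasurableSpace.comap Z inferInstance]) ω *
          (P[G | MeasurableSpace.comap Z inferInstance]) ω ∂P)|
      ≤ Real.sqrt ((∫ ω, (P[G | MeasurableSpace.comap Y inferInstance]) ω ^ 2 ∂P) -
            (∫ ω, (P[G | MeasurableSpace.comap Y inferInstance]) ω ∂P) ^ 2) *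
          Real.sqrt ((∫ ω, (Y ω - (P[Z | MeasurableSpace.comap Y inferInstance]) ω) ^ 2 ∂P) -
            (∫ ω, (Y ω - (P[Z | MeasurableSpace.comap Y inferInstance]) ω) ∂P) ^ 2) ∧
    Real.sqrt ((∫ ω, (P[G | MeasurableSpace.comap Y inferInstance]) ω ^ 2 ∂P) -
          (∫ ω, (P[G | MeasurableSpace.comap Y inferInstance]) ω ∂P) ^ 2) *
        Real.sqrt ((∫ ω, (Y ω - (P[Z | MeasurableSpace.comap Y inferInstance]) ω) ^ 2 ∂P) -
          (∫ ω, (Y ω - (P[Z | MeasurableSpace.comap Y inferInstance]) ω) ∂P) ^ 2)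
      ≤ Real.sqrt ((∫ ω, (P[G | MeasurableSpace.comap Y inferInstance]) ω ^ 2 ∂P) -
            (∫ ω, (P[G | MeasurableSpace.comap Y inferInstance]) ω ∂P) ^ 2) *
          Real.sqrt (∫ ω, (Y ω - Z ω) ^ 2 ∂P) := by
  set mY := MeasurableSpace.comap Y inferInstance
  set mZ := MeasurableSpace.comap Z inferInstance
  have hYσ : StronglyMeasurable[mY] Y := (comap_measurable Y).stronglyMeasurable
  have hZσ : StronglyMeasurable[mZ] Z := (comap_measurable Z).stronglyMeasurable
  have hG2 : MemLp G 2 P := MemLp.of_bound hGm.aestronglyMeasurable 1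
    (ae_of_all _ fun ω ↦ by rcases hG01 ω with h | h <;> simp [h])
  have hGY : MemLp (P[G|mY]) 2 P := hG2.condExp one_le_two
  have hU : MemLp (Y - P[Z|mY]) 2 P := hY2.sub (hZ2.condExp one_le_two)
  have hVarGY := variance_eq_sub hGY
  have hVarU := variance_eq_sub hU
  simp only [Pi.pow_apply, Pi.sub_apply] at hVarGY hVarU
  rw [← hVarGY, ← hVarU,
    budget_eq_covariance_of_calibrated hYm.comap_le hZm.comap_le hYσ hZσ hY2 hZ2 hG2 hcal]
  refine ⟨?_, ?_⟩
  · rw [mul_comm]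
    exact abs_covariance_le_sqrt_variance_mul_sqrt_variance hU hGY
  · gcongr
    exact variance_sub_condExp_le hYm.comap_le hYσ hY2 hZ2
end

section
/- Let W : Ω → ℝᵏ be a random vector. If Y and G are conditionally independent given σ(W), and W and G are conditionally independent given σ(Y), then E[G | σ(W)] = E[G | σ(Y)] almost surely; consequently Var(E[G | σ(W)]) = Var(E[G | σ(Y)]). -/
/-!
If every `B ∈ m₂` is conditionally independent of `S` given `m₁`, then pulling the
`m₁`-measurable factor `μ⟦S | m₁⟧` out of a conditional expectation shows that it integrates like
`1_S` over every `A ∩ B` with `A ∈ m₁`, `B ∈ m₂`. These sets form a π-system generating `m₁ ⊔ m₂`,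
so `μ⟦S | m₁⟧ = μ⟦S | m₁ ⊔ m₂⟧`. With `S = {G = 1}`, the two hypotheses give
`E[G | σ(W)] = E[G | σ(W, Y)] = E[G | σ(Y)]`, and a.e. equal functions have the same variance.
-/

open MeasureTheory ProbabilityTheory

namespace MeasurableSpace

variable {Ω : Type*}

lemma isPiSystem_image2_inter (m₁ m₂ : MeasurableSpace Ω) :
    IsPiSystem (Set.image2 (· ∩ ·) {s | MeasurableSet[m₁] s} {s | MeasurableSet[m₂] s}) := by
  rintro _ ⟨A₁, hA₁, B₁, hB₁, rfl⟩ _ ⟨A₂, hA₂, B₂, hB₂, rfl⟩ -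
  exact ⟨A₁ ∩ A₂, hA₁.inter hA₂, B₁ ∩ B₂, hB₁.inter hB₂, Set.inter_inter_inter_comm ..⟩

lemma sup_eq_generateFrom_image2_inter (m₁ m₂ : MeasurableSpace Ω) :
    m₁ ⊔ m₂ = generateFrom
      (Set.image2 (· ∩ ·) {s | MeasurableSet[m₁] s} {s | MeasurableSet[m₂] s}) := by
  refine le_antisymm (sup_le ?_ ?_) (generateFrom_le ?_)
  · exact fun A hA ↦ measurableSet_generateFrom
      ⟨A, hA, Set.univ, MeasurableSet.univ, Set.inter_univ A⟩
  · exact fun B hB ↦ measurableSet_generateFrom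
      ⟨Set.univ, MeasurableSet.univ, B, hB, Set.univ_inter B⟩
  · rintro _ ⟨A, hA, B, hB, rfl⟩
    exact (le_sup_left (b := m₂) A hA).inter (le_sup_right (a := m₁) B hB)

end MeasurableSpace

namespace MeasureTheory

variable {α E : Type*} [NormedAddCommGroup E] [NormedSpace ℝ E] {m m₀ : MeasurableSpace α}
  {μ : Measure α}

theorem setIntegral_eq_of_isPiSystem (hm : m ≤ m₀) {s : Set (Set α)}
    (h_eq : m = MeasurableSpace.generateFrom s) (h_inter : IsPiSystem s) {f g : α → E}
    (hf : Integrable f μ) (hg : Integrable g μ)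
    (basic : ∀ t ∈ s, ∫ x in t, f x ∂μ = ∫ x in t, g x ∂μ)
    (h_univ : ∫ x, f x ∂μ = ∫ x, g x ∂μ) {t : Set α} (ht : MeasurableSet[m] t) :
    ∫ x in t, f x ∂μ = ∫ x in t, g x ∂μ := by
  induction t, ht using MeasurableSpace.induction_on_inter h_eq h_inter with
  | empty => simp
  | basic t ht => exact basic t ht
  | compl t ht h_t =>
    have hf_add := integral_add_compl (hm t ht) hf
    have hg_add := integral_add_compl (hm t ht) hg
    rw [h_t, h_univ, ← hg_add] at hf_add
    exact add_left_cancel hf_add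
  | iUnion t ht_disj ht h_t =>
    rw [integral_iUnion (fun i ↦ hm _ (ht i)) ht_disj hf.integrableOn,
      integral_iUnion (fun i ↦ hm _ (ht i)) ht_disj hg.integrableOn]
    exact tsum_congr h_t

end MeasureTheory

namespace ProbabilityTheory

variable {Ω : Type*} {m m₁ m₂ m₀ : MeasurableSpace Ω} {μ : Measure Ω} [IsFiniteMeasure μ]
  {A B S : Set Ω}

theorem setIntegral_inter_condExp_indicator_of_condIndep (hm : m ≤ m₀)
    (hA : MeasurableSet[m] A) (hB : MeasurableSet B) (hS : MeasurableSet S)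
    (hBS : μ⟦B ∩ S | m⟧ =ᵐ[μ] μ⟦B | m⟧ * μ⟦S | m⟧) :
    ∫ x in A ∩ B, (μ⟦S | m⟧) x ∂μ = ∫ x in A ∩ B, S.indicator (fun _ ↦ (1 : ℝ)) x ∂μ := by
  have h_pull : μ[B.indicator (μ⟦S | m⟧) | m] =ᵐ[μ] μ⟦B ∩ S | m⟧ := by
    have h_eq : B.indicator (μ⟦S | m⟧) = B.indicator (fun _ ↦ (1 : ℝ)) * μ⟦S | m⟧ := by
      ext x
      simp [← Set.indicator_mul_left]
    rw [h_eq]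
    refine (condExp_mul_of_stronglyMeasurable_right stronglyMeasurable_condExp ?_
      ((integrable_const 1).indicator hB)).trans hBS.symm
    exact h_eq ▸ integrable_condExp.indicator hB
  calc ∫ x in A ∩ B, (μ⟦S | m⟧) x ∂μ
      = ∫ x in A, B.indicator (μ⟦S | m⟧) x ∂μ := (setIntegral_indicator hB).symm
    _ = ∫ x in A, (μ[B.indicator (μ⟦S | m⟧) | m]) x ∂μ :=
      (setIntegral_condExp hm (integrable_condExp.indicator hB) hA).symm
    _ = ∫ x in A, (μ⟦B ∩ S | m⟧) x ∂μ :=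
      setIntegral_congr_ae (hm A hA) (h_pull.mono fun _ h _ ↦ h)
    _ = ∫ x in A, (B ∩ S).indicator (fun _ ↦ (1 : ℝ)) x ∂μ :=
      setIntegral_condExp hm ((integrable_const 1).indicator (hB.inter hS)) hA
    _ = ∫ x in A ∩ B, S.indicator (fun _ ↦ (1 : ℝ)) x ∂μ := by
      rw [← Set.indicator_indicator, setIntegral_indicator hB]

theorem condExp_indicator_ae_eq_condExp_sup (hm₁ : m₁ ≤ m₀) (hm₂ : m₂ ≤ m₀)
    (hS : MeasurableSet S)
    (h_indep : ∀ B, MeasurableSet[m₂] B → μ⟦B ∩ S | m₁⟧ =ᵐ[μ] μ⟦B | m₁⟧ * μ⟦S | m₁⟧) :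
    μ⟦S | m₁⟧ =ᵐ[μ] μ⟦S | m₁ ⊔ m₂⟧ := by
  have hm : m₁ ⊔ m₂ ≤ m₀ := sup_le hm₁ hm₂
  refine ae_eq_condExp_of_forall_setIntegral_eq hm ((integrable_const 1).indicator hS)
    (fun _ _ _ ↦ integrable_condExp.integrableOn) (fun t ht _ ↦ ?_)
    (stronglyMeasurable_condExp.mono (le_sup_left (b := m₂))).aestronglyMeasurable
  refine setIntegral_eq_of_isPiSystem hm (MeasurableSpace.sup_eq_generateFrom_image2_inter m₁ m₂)
    (MeasurableSpace.isPiSystem_image2_inter m₁ m₂) integrable_condExp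
    ((integrable_const 1).indicator hS) ?_ (integral_condExp hm₁) ht
  rintro _ ⟨A, hA, B, hB, rfl⟩
  exact setIntegral_inter_condExp_indicator_of_condIndep hm₁ hA (hm₂ B hB) hS (h_indep B hB)

theorem condExp_indicator_ae_eq_of_condIndep (hm₁ : m₁ ≤ m₀) (hm₂ : m₂ ≤ m₀)
    (hS : MeasurableSet S)
    (h₁ : ∀ B, MeasurableSet[m₂] B → μ⟦B ∩ S | m₁⟧ =ᵐ[μ] μ⟦B | m₁⟧ * μ⟦S | m₁⟧)
    (h₂ : ∀ A, MeasurableSet[m₁] A → μ⟦A ∩ S | m₂⟧ =ᵐ[μ] μ⟦A | m₂⟧ * μ⟦S | m₂⟧) :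
    μ⟦S | m₁⟧ =ᵐ[μ] μ⟦S | m₂⟧ := by
  have h₂₁ := condExp_indicator_ae_eq_condExp_sup hm₂ hm₁ hS h₂
  rw [sup_comm] at h₂₁
  exact (condExp_indicator_ae_eq_condExp_sup hm₁ hm₂ hS h₁).trans h₂₁.symm

end ProbabilityTheory

theorem stmt10_general {Ω : Type*} [mΩ : MeasurableSpace Ω] [StandardBorelSpace Ω]
    (P : Measure Ω) [IsProbabilityMeasure P]
    (Y G : Ω → ℝ) (hYm : Measurable Y) (hGm : Measurable G)
    (hG01 : ∀ ω, G ω = 0 ∨ G ω = 1)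
    {k : ℕ} (W : Ω → (Fin k → ℝ)) (hWm : Measurable W)
    (hYG : CondIndepFun (MeasurableSpace.comap W inferInstance) hWm.comap_le Y G P)
    (hWG : CondIndepFun (MeasurableSpace.comap Y inferInstance) hYm.comap_le W G P) :
    (P[G | MeasurableSpace.comap W inferInstance]
        =ᵐ[P] P[G | MeasurableSpace.comap Y inferInstance]) ∧
    ((∫ ω, (P[G | MeasurableSpace.comap W inferInstance]) ω ^ 2 ∂P) -
        (∫ ω, (P[G | MeasurableSpace.comap W inferInstance]) ω ∂P) ^ 2
      = (∫ ω, (P[G | MeasurableSpace.comap Y inferInstance]) ω ^ 2 ∂P) -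
        (∫ ω, (P[G | MeasurableSpace.comap Y inferInstance]) ω ∂P) ^ 2) := by
  have hG : G = (G ⁻¹' {1}).indicator fun _ ↦ (1 : ℝ) := by
    ext ω
    rcases hG01 ω with h | h <;> simp [h]
  have hS : MeasurableSet[MeasurableSpace.comap G inferInstance] (G ⁻¹' {1}) :=
    ⟨{1}, measurableSet_singleton 1, rfl⟩
  rw [condIndepFun_iff _ _ _ _ hYm hGm] at hYG
  rw [condIndepFun_iff _ _ _ _ hWm hGm] at hWG
  have h_eq : P[G | MeasurableSpace.comap W inferInstance]
      =ᵐ[P] P[G | MeasurableSpace.comap Y inferInstance] := by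
    rw [hG]
    exact condExp_indicator_ae_eq_of_condIndep hWm.comap_le hYm.comap_le (hGm.comap_le _ hS)
      (fun B hB ↦ hYG B _ hB hS) (fun A hA ↦ hWG A _ hA hS)
  refine ⟨h_eq, ?_⟩
  rw [integral_congr_ae (h_eq.mono fun _ h ↦ congrArg (· ^ 2) h), integral_congr_ae h_eq]

/-- If `Y ⟂ G | σ(W)` and `W ⟂ G | σ(Y)`, then
`E[G|σ(W)] = E[G|σ(Y)]` almost surely, and consequently
`Var(E[G|σ(W)]) = Var(E[G|σ(Y)])` with `Var(U) = E[U²] − (E[U])²`. -/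
theorem stmt10 {Ω : Type*} [mΩ : MeasurableSpace Ω] [StandardBorelSpace Ω] [Nonempty Ω]
    (P : Measure Ω) [IsProbabilityMeasure P]
    (Y G : Ω → ℝ) (hYm : Measurable Y) (hGm : Measurable G)
    (hY2 : MemLp Y 2 P) (hG01 : ∀ ω, G ω = 0 ∨ G ω = 1)
    {k : ℕ} (W : Ω → (Fin k → ℝ)) (hWm : Measurable W)
    (hYG : CondIndepFun (MeasurableSpace.comap W inferInstance) hWm.comap_le Y G P)
    (hWG : CondIndepFun (MeasurableSpace.comap Y inferInstance) hYm.comap_le W G P) :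
    (P[G | MeasurableSpace.comap W inferInstance]
        =ᵐ[P] P[G | MeasurableSpace.comap Y inferInstance]) ∧
    ((∫ ω, (P[G | MeasurableSpace.comap W inferInstance]) ω ^ 2 ∂P) -
        (∫ ω, (P[G | MeasurableSpace.comap W inferInstance]) ω ∂P) ^ 2
      = (∫ ω, (P[G | MeasurableSpace.comap Y inferInstance]) ω ^ 2 ∂P) -
        (∫ ω, (P[G | MeasurableSpace.comap Y inferInstance]) ω ∂P) ^ 2) :=
  stmt10_general (mΩ := mΩ) P Y G hYm hGm hG01 W hWm hYG hWG
end

section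
/- Let Y, Z : Ω → ℝ be square-integrable random variables with E[Y | σ(Z)] = Z almost surely and E[Z | σ(Y)] = Y almost surely. Then Y = Z almost surely. -/
open MeasureTheory ProbabilityTheory

/-! If `E[Y | σ(Z)] = Z`, the residual `Y - Z` is orthogonal to every `σ(Z)`-measurable square
integrable variable, in particular to `Z`: `E[Z (Y - Z)] = 0`. Symmetrically `E[Y (Z - Y)] = 0`,
and adding the two gives `E[(Y - Z)²] = 0`. -/

theorem integral_mul_sub_eq_zero_of_condExp_ae_eq {Ω : Type*} {m m₀ : MeasurableSpace Ω}
    {μ : Measure Ω} (hm : m ≤ m₀) [SigmaFinite (μ.trim hm)] {f g : Ω → ℝ}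
    (hf : Integrable f μ) (hgf : Integrable (fun ω ↦ g ω * (f ω - g ω)) μ)
    (hcond : μ[f | m] =ᵐ[μ] g) :
    ∫ ω, g ω * (f ω - g ω) ∂μ = 0 := by
  have hg_meas : AEStronglyMeasurable[m] g μ :=
    stronglyMeasurable_condExp.aestronglyMeasurable.congr hcond
  have hg_int : Integrable g μ := integrable_condExp.congr hcond
  have hresidual : μ[f - g | m] =ᵐ[μ] 0 := by
    filter_upwards [condExp_sub hf hg_int m, hcond,
      condExp_of_aestronglyMeasurable' hm hg_meas hg_int] with ω h hf' hg'
    simp [h, hf', hg']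
  calc ∫ ω, g ω * (f ω - g ω) ∂μ = ∫ ω, μ[g * (f - g) | m] ω ∂μ := (integral_condExp hm).symm
    _ = ∫ ω, (g * μ[f - g | m]) ω ∂μ :=
      integral_congr_ae (condExp_mul_of_aestronglyMeasurable_left hg_meas hgf (hf.sub hg_int))
    _ = ∫ ω, (g * 0 : Ω → ℝ) ω ∂μ := integral_congr_ae (Filter.EventuallyEq.rfl.mul hresidual)
    _ = 0 := by simp

/-- If `Y, Z` are square-integrable with `E[Y|σ(Z)] = Z` a.s. and
`E[Z|σ(Y)] = Y` a.s., then `Y = Z` almost surely. -/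
theorem stmt13 {Ω : Type*} [MeasurableSpace Ω] (P : Measure Ω) [IsProbabilityMeasure P]
    (Y Z : Ω → ℝ) (hYm : Measurable Y) (hZm : Measurable Z)
    (hY2 : MemLp Y 2 P) (hZ2 : MemLp Z 2 P)
    (hYZ : P[Y | MeasurableSpace.comap Z inferInstance] =ᵐ[P] Z)
    (hZY : P[Z | MeasurableSpace.comap Y inferInstance] =ᵐ[P] Y) :
    Y =ᵐ[P] Z := by
  have hZ_int : Integrable (fun ω ↦ Z ω * (Y ω - Z ω)) P := hZ2.integrable_mul (hY2.sub hZ2)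
  have hY_int : Integrable (fun ω ↦ Y ω * (Z ω - Y ω)) P := hY2.integrable_mul (hZ2.sub hY2)
  have hZ_orth : ∫ ω, Z ω * (Y ω - Z ω) ∂P = 0 :=
    integral_mul_sub_eq_zero_of_condExp_ae_eq hZm.comap_le (hY2.integrable one_le_two) hZ_int hYZ
  have hY_orth : ∫ ω, Y ω * (Z ω - Y ω) ∂P = 0 :=
    integral_mul_sub_eq_zero_of_condExp_ae_eq hYm.comap_le (hZ2.integrable one_le_two) hY_int hZY
  have hsq : ∫ ω, (Y ω - Z ω) ^ 2 ∂P = 0 :=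
    calc ∫ ω, (Y ω - Z ω) ^ 2 ∂P
        = -(∫ ω, Z ω * (Y ω - Z ω) ∂P + ∫ ω, Y ω * (Z ω - Y ω) ∂P) := by
          rw [← integral_add hZ_int hY_int, ← integral_neg]
          congr 1 with ω
          ring
      _ = 0 := by rw [hZ_orth, hY_orth, add_zero, neg_zero]
  have hsq_ae := (integral_eq_zero_iff_of_nonneg (fun ω ↦ sq_nonneg (Y ω - Z ω))
    (hY2.sub hZ2).integrable_sq).mp hsq
  filter_upwards [hsq_ae] with ω hω
  exact sub_eq_zero.mp (pow_eq_zero_iff two_ne_zero |>.mp hω)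
end

section
/- Suppose Y is {0,1}-valued with 0 < P(Y = 1) < 1, and Z is globally calibrated: E[Y | σ(Z)] = Z almost surely. Then E[Z | Y = 1] − E[Z | Y = 0] = Var(Z) / Var(Y), where Var(U) := E[U²] − (E[U])² and for an event A with P(A) > 0, E[X | A] := E[X·1_A]/P(A). -/
/-! Since `Y` is the indicator of `A = {Y = 1}`, calibration gives `E[Z] = E[Y] = p := P(A)`, and
the tower property together with pulling out `Z` gives `∫_A Z = E[Z·Y] = E[Z·E[Y | σ(Z)]] = E[Z²]`.
Hence `E[Z | A] = E[Z²]/p` and `E[Z | Aᶜ] = (p - E[Z²])/(1 - p)`, whose difference is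
`(E[Z²] - p²)/(p(1 - p)) = Var(Z)/Var(Y)`. -/

open MeasureTheory ProbabilityTheory

section Calibration

variable {Ω : Type*} {m m₀ : MeasurableSpace Ω} {μ : Measure Ω} {Y Z : Ω → ℝ}

theorem integral_eq_of_condExp_ae_eq (hm : m ≤ m₀) [SigmaFinite (μ.trim hm)]
    (hcal : μ[Y | m] =ᵐ[μ] Z) : ∫ ω, Z ω ∂μ = ∫ ω, Y ω ∂μ :=
  (integral_congr_ae hcal).symm.trans (integral_condExp hm)

theorem integral_mul_eq_integral_sq_of_condExp_ae_eq (hm : m ≤ m₀) [SigmaFinite (μ.trim hm)]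
    (hZ : StronglyMeasurable[m] Z) (hZY : Integrable (Z * Y) μ) (hY : Integrable Y μ)
    (hcal : μ[Y | m] =ᵐ[μ] Z) : ∫ ω, Z ω * Y ω ∂μ = ∫ ω, Z ω ^ 2 ∂μ :=
  calc ∫ ω, Z ω * Y ω ∂μ = ∫ ω, (μ[Z * Y | m]) ω ∂μ := (integral_condExp hm).symm
    _ = ∫ ω, Z ω * (μ[Y | m]) ω ∂μ :=
      integral_congr_ae (condExp_mul_of_stronglyMeasurable_left hZ hZY hY)
    _ = ∫ ω, Z ω ^ 2 ∂μ := integral_congr_ae (hcal.mono fun ω h ↦ by simp only [h, sq])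

end Calibration

theorem condExpEvent_compl {Ω : Type*} [MeasurableSpace Ω] {P : Measure Ω}
    [IsProbabilityMeasure P] {X : Ω → ℝ} {A : Set Ω} (hX : Integrable X P)
    (hA : MeasurableSet A) :
    condExpEvent P X Aᶜ = ((∫ ω, X ω ∂P) - ∫ ω in A, X ω ∂P) / (1 - P.real A) := by
  rw [condExpEvent, ← measureReal_def, measureReal_compl hA, probReal_univ,
    ← integral_add_compl hA hX, add_sub_cancel_left]

theorem sub_div_one_sub_eq {p s : ℝ} (hp₀ : 0 < p) (hp₁ : p < 1) :
    s / p - (p - s) / (1 - p) = (s - p ^ 2) / (p - p ^ 2) := by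
  have h₁ : 1 - p ≠ 0 := by linarith
  rw [show p - p ^ 2 = p * (1 - p) by ring]
  field_simp
  ring

theorem condExpEvent_sub_condExpEvent_compl_of_condExp_indicator {Ω : Type*}
    {m : MeasurableSpace Ω} [MeasurableSpace Ω] {P : Measure Ω} [IsProbabilityMeasure P]
    {Z : Ω → ℝ} {A : Set Ω} (hm : m ≤ ‹_›) (hZ : StronglyMeasurable[m] Z)
    (hA : MeasurableSet A) (hpos : 0 < P A) (hlt : P A < 1)
    (hcal : P[A.indicator 1 | m] =ᵐ[P] Z) :
    condExpEvent P Z A - condExpEvent P Z Aᶜ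
      = ((∫ ω, Z ω ^ 2 ∂P) - (∫ ω, Z ω ∂P) ^ 2) / (P.real A - P.real A ^ 2) := by
  have hZint : Integrable Z P := integrable_condExp.congr hcal
  have hZY : Z * A.indicator 1 = A.indicator Z := by
    ext ω; simp [Set.indicator]
  have hsq := integral_mul_eq_integral_sq_of_condExp_ae_eq hm hZ
    (hZY ▸ hZint.indicator hA) ((integrable_const 1).indicator hA) hcal
  have hmean := integral_eq_of_condExp_ae_eq hm hcal
  simp only [← Pi.mul_apply, hZY, integral_indicator hA] at hsq
  rw [integral_indicator_one hA] at hmean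
  rw [condExpEvent_compl hZint hA, condExpEvent, ← measureReal_def, hsq, hmean]
  exact sub_div_one_sub_eq (ENNReal.toReal_pos hpos.ne' (measure_ne_top P A))
    (by simpa [measureReal_def] using ENNReal.toReal_strict_mono ENNReal.one_ne_top hlt)

theorem stmt15_general {Ω : Type*} [MeasurableSpace Ω] (P : Measure Ω) [IsProbabilityMeasure P]
    (Y Z : Ω → ℝ) (hYm : Measurable Y) (hZm : Measurable Z)
    (hY01 : ∀ ω, Y ω = 0 ∨ Y ω = 1)
    (hpos : 0 < P {ω | Y ω = 1}) (hlt : P {ω | Y ω = 1} < 1)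
    (hcal : P[Y | MeasurableSpace.comap Z inferInstance] =ᵐ[P] Z) :
    condExpEvent P Z {ω | Y ω = 1} - condExpEvent P Z {ω | Y ω = 0}
      = ((∫ ω, Z ω ^ 2 ∂P) - (∫ ω, Z ω ∂P) ^ 2) /
        ((∫ ω, Y ω ^ 2 ∂P) - (∫ ω, Y ω ∂P) ^ 2) := by
  set A := {ω | Y ω = 1}
  have hA : MeasurableSet A := hYm (measurableSet_singleton 1)
  have hY : Y = A.indicator 1 := funext fun ω ↦ by rcases hY01 ω with h | h <;> simp [A, h]
  have hYsq : (fun ω ↦ Y ω ^ 2) = Y := funext fun ω ↦ by rcases hY01 ω with h | h <;> simp [h]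
  have hY0 : {ω | Y ω = 0} = Aᶜ := by ext ω; rcases hY01 ω with h | h <;> simp [A, h]
  rw [hY0, hYsq, hY, integral_indicator_one hA]
  rw [hY] at hcal
  exact condExpEvent_sub_condExpEvent_compl_of_condExp_indicator hZm.comap_le
    (comap_measurable Z).stronglyMeasurable hA hpos hlt hcal

/-- If `Y` is {0,1}-valued with `0 < P(Y=1) < 1` and `Z` is globally
calibrated, then `E[Z|Y=1] − E[Z|Y=0] = Var(Z)/Var(Y)`, with `Var(U) = E[U²] − (E[U])²`. -/
theorem stmt15 {Ω : Type*} [MeasurableSpace Ω] (P : Measure Ω) [IsProbabilityMeasure P]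
    (Y Z : Ω → ℝ) (hYm : Measurable Y) (hZm : Measurable Z)
    (hY2 : MemLp Y 2 P) (hZ2 : MemLp Z 2 P)
    (hY01 : ∀ ω, Y ω = 0 ∨ Y ω = 1)
    (hpos : 0 < P {ω | Y ω = 1}) (hlt : P {ω | Y ω = 1} < 1)
    (hcal : P[Y | MeasurableSpace.comap Z inferInstance] =ᵐ[P] Z) :
    condExpEvent P Z {ω | Y ω = 1} - condExpEvent P Z {ω | Y ω = 0}
      = ((∫ ω, Z ω ^ 2 ∂P) - (∫ ω, Z ω ∂P) ^ 2) /
        ((∫ ω, Y ω ^ 2 ∂P) - (∫ ω, Y ω ∂P) ^ 2) :=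
  stmt15_general P Y Z hYm hZm hY01 hpos hlt hcal
end

section
/- Let Y, Ŷ, G be {0,1}-valued random variables with P(Ŷ = ŷ, G = g) > 0 and P(Y = y, G = g) > 0 for all y, ŷ, g ∈ {0,1}. Define PPV_g := P(Y = 1 | Ŷ = 1, G = g), FOR_g := P(Y = 1 | Ŷ = 0, G = g), TPR_g := P(Ŷ = 1 | Y = 1, G = g), FPR_g := P(Ŷ = 1 | Y = 0, G = g), PPV := P(Y = 1 | Ŷ = 1), FOR := P(Y = 1 | Ŷ = 0); Δ PPV := PPV₁ − PPV₀ and similarly for Δ FOR, Δ TPR, Δ FPR; ω_Y(y) := Var(G | Y = y)·P(Y = y) and ω_Ŷ(ŷ) := Var(G | Ŷ = ŷ)·P(Ŷ = ŷ); and the derived risk score Z_Ŷ := PPV·1{Ŷ = 1} + FOR·1{Ŷ = 0} with MSE(Z_Ŷ) := E[(Y − Z_Ŷ)²]. Then MSE(Z_Ŷ) · (P(G = 1 | Y = 1) − P(G = 1 | Y = 0)) = ω_Ŷ(1)·Δ PPV + ω_Ŷ(0)·Δ FOR + (PPV − FOR)·(ω_Y(1)·Δ TPR + ω_Y(0)·Δ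 FPR). -/
/-!
All quantities are rational functions of the eight cell probabilities `P(Y = y, Ŷ = ŷ, G = g)`.
Two Bernoulli computations do the work. Within `{Ŷ = ŷ}` the score `Z_Ŷ` is the conditional mean
of `Y`, so the squared error contributes `P(Y = 1, Ŷ = ŷ) P(Y = 0, Ŷ = ŷ) / P(Ŷ = ŷ)`. And for
events `A`, `B`, writing `a_g = P(A, G = g)` and `b_g = P(B, A, G = g)`, one has
`Var(G | A) P(A) (b₁/a₁ - b₀/a₀) = (b₁ a₀ - b₀ a₁) / P(A)`, in which the group-wise
denominators `a_g` have cancelled. After these substitutions only the denominators `P(Ŷ = ŷ)` and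
`P(Y = y)` remain, and clearing them leaves a polynomial identity in the cells.
-/

open MeasureTheory ProbabilityTheory

open Set

lemma measureReal_ne_zero_of_inter_pos {Ω : Type*} [MeasurableSpace Ω] {P : Measure Ω}
    [IsFiniteMeasure P] {A B : Set Ω} (h : 0 < P (A ∩ B)) : P.real A ≠ 0 :=
  (measureReal_ne_zero_iff).2 (h.trans_le (measure_mono inter_subset_left)).ne'

section Binary

variable {Ω : Type*} {X : Ω → ℝ}

lemma setOf_eq_zero_eq_compl_of_binary_s16 (hX01 : ∀ ω, X ω = 0 ∨ X ω = 1) :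
    {ω | X ω = 0} = {ω | X ω = 1}ᶜ := by
  ext ω
  rcases hX01 ω with h | h <;> simp [h]

lemma eq_indicator_one_of_binary_s16 (hX01 : ∀ ω, X ω = 0 ∨ X ω = 1) :
    X = {ω | X ω = 1}.indicator 1 := by
  ext ω
  rcases hX01 ω with h | h <;> simp [h]

lemma sq_sub_const_eq_of_binary (hX01 : ∀ ω, X ω = 0 ∨ X ω = 1) (c : ℝ) :
    (fun ω ↦ (X ω - c) ^ 2) = fun ω ↦ (1 - c) ^ 2 * X ω + c ^ 2 * (1 - X ω) := by
  ext ω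
  rcases hX01 ω with h | h <;> simp [h]

variable [MeasurableSpace Ω] {P : Measure Ω}

lemma measureReal_inter_add_inter_of_binary [IsFiniteMeasure P] (hX : Measurable X)
    (hX01 : ∀ ω, X ω = 0 ∨ X ω = 1) (A : Set Ω) :
    P.real (A ∩ {ω | X ω = 1}) + P.real (A ∩ {ω | X ω = 0}) = P.real A := by
  rw [setOf_eq_zero_eq_compl_of_binary_s16 hX01, ← sdiff_eq,
    measureReal_inter_add_sdiff (measurableSet_eq_fun hX measurable_const)]

lemma integrable_of_binary_s16 [IsFiniteMeasure P] (hX : Measurable X)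
    (hX01 : ∀ ω, X ω = 0 ∨ X ω = 1) : Integrable X P := by
  rw [eq_indicator_one_of_binary_s16 hX01]
  exact (integrable_const 1).indicator (measurableSet_eq_fun hX measurable_const)

lemma integrable_sq_sub_const_of_binary [IsFiniteMeasure P] (hX : Measurable X)
    (hX01 : ∀ ω, X ω = 0 ∨ X ω = 1) (c : ℝ) :
    Integrable (fun ω ↦ (X ω - c) ^ 2) P := by
  have hXi := integrable_of_binary_s16 (P := P) hX hX01
  rw [sq_sub_const_eq_of_binary hX01]
  exact (hXi.const_mul _).add (((integrable_const 1).sub hXi).const_mul _)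

lemma setIntegral_eq_measureReal_of_binary (hX : Measurable X)
    (hX01 : ∀ ω, X ω = 0 ∨ X ω = 1) (A : Set Ω) :
    ∫ ω in A, X ω ∂P = P.real ({ω | X ω = 1} ∩ A) := by
  conv_lhs => rw [eq_indicator_one_of_binary_s16 hX01]
  rw [setIntegral_indicator (measurableSet_eq_fun hX measurable_const)]
  simp only [Pi.one_apply, setIntegral_const, smul_eq_mul, mul_one, inter_comm]

lemma condExpEvent_eq_condProbEvent_of_binary (hX : Measurable X)
    (hX01 : ∀ ω, X ω = 0 ∨ X ω = 1) (A : Set Ω) :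
    condExpEvent P X A = condProbEvent P {ω | X ω = 1} A := by
  rw [condExpEvent, setIntegral_eq_measureReal_of_binary hX hX01]
  rfl

end Binary

section Moments

variable {Ω : Type*} [MeasurableSpace Ω] {P : Measure Ω} [IsFiniteMeasure P] {X : Ω → ℝ}

lemma setIntegral_sq_sub_condProbEvent_of_binary (hX : Measurable X)
    (hX01 : ∀ ω, X ω = 0 ∨ X ω = 1) {A : Set Ω} (hA : P.real A ≠ 0) :
    ∫ ω in A, (X ω - condProbEvent P {ω | X ω = 1} A) ^ 2 ∂P
      = P.real ({ω | X ω = 1} ∩ A) * P.real ({ω | X ω = 0} ∩ A) / P.real A := by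
  have hXi := (integrable_of_binary_s16 (P := P) hX hX01).integrableOn (s := A)
  have hXi' : IntegrableOn (fun ω ↦ 1 - X ω) A P := (integrable_const 1).integrableOn.sub hXi
  have hsplit := measureReal_inter_add_inter_of_binary (P := P) hX hX01 A
  rw [sq_sub_const_eq_of_binary hX01, integral_add (hXi.const_mul _) (hXi'.const_mul _),
    integral_const_mul, integral_const_mul, integral_sub (integrable_const 1).integrableOn hXi,
    setIntegral_const, setIntegral_eq_measureReal_of_binary hX hX01]
  simp only [condProbEvent, ← measureReal_def, smul_eq_mul, mul_one]
  rw [inter_comm {ω | X ω = 0}, inter_comm {ω | X ω = 1}, ← hsplit]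
  rw [← hsplit] at hA
  field_simp
  ring

lemma integral_sq_sub_condProbEvent_of_binary {Y Z : Ω → ℝ} (hY : Measurable Y)
    (hY01 : ∀ ω, Y ω = 0 ∨ Y ω = 1) (hX : Measurable X)
    (hX01 : ∀ ω, X ω = 0 ∨ X ω = 1)
    (hZ : ∀ ω, Z ω = if X ω = 1 then condProbEvent P {ω | Y ω = 1} {ω | X ω = 1}
      else condProbEvent P {ω | Y ω = 1} {ω | X ω = 0})
    (h1 : P.real {ω | X ω = 1} ≠ 0) (h0 : P.real {ω | X ω = 0} ≠ 0) :
    ∫ ω, (Y ω - Z ω) ^ 2 ∂P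
      = P.real ({ω | Y ω = 1} ∩ {ω | X ω = 1}) *
            P.real ({ω | Y ω = 0} ∩ {ω | X ω = 1}) / P.real {ω | X ω = 1} +
          P.real ({ω | Y ω = 1} ∩ {ω | X ω = 0}) *
            P.real ({ω | Y ω = 0} ∩ {ω | X ω = 0}) / P.real {ω | X ω = 0} := by
  have hm1 : MeasurableSet {ω | X ω = 1} := measurableSet_eq_fun hX measurable_const
  have hpart : ∀ ω, (Y ω - Z ω) ^ 2 =
      {ω | X ω = 1}.indicator
          (fun ω ↦ (Y ω - condProbEvent P {ω | Y ω = 1} {ω | X ω = 1}) ^ 2) ω +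
        {ω | X ω = 1}ᶜ.indicator
          (fun ω ↦ (Y ω - condProbEvent P {ω | Y ω = 1} {ω | X ω = 0}) ^ 2) ω := by
    intro ω
    rcases hX01 ω with h | h <;> simp [hZ, h]
  have hi := integrable_sq_sub_const_of_binary (P := P) hY hY01
  rw [integral_congr_ae (ae_of_all _ hpart), integral_add ((hi _).indicator hm1)
      ((hi _).indicator hm1.compl), integral_indicator hm1, integral_indicator hm1.compl,
    ← setOf_eq_zero_eq_compl_of_binary_s16 hX01,
    setIntegral_sq_sub_condProbEvent_of_binary hY hY01 h1,
    setIntegral_sq_sub_condProbEvent_of_binary hY hY01 h0]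

lemma condVarEvent_mul_measureReal_mul_sub_of_binary {G : Ω → ℝ} (hG : Measurable G)
    (hG01 : ∀ ω, G ω = 0 ∨ G ω = 1) (B A : Set Ω) (h1 : 0 < P (A ∩ {ω | G ω = 1}))
    (h0 : 0 < P (A ∩ {ω | G ω = 0})) :
    condVarEvent P G A * P.real A *
        (condProbEvent P B (A ∩ {ω | G ω = 1}) - condProbEvent P B (A ∩ {ω | G ω = 0}))
      = (P.real (B ∩ (A ∩ {ω | G ω = 1})) * P.real (A ∩ {ω | G ω = 0}) -
          P.real (B ∩ (A ∩ {ω | G ω = 0})) * P.real (A ∩ {ω | G ω = 1})) / P.real A := by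
  have h1' : P.real (A ∩ {ω | G ω = 1}) ≠ 0 := (measureReal_ne_zero_iff).2 h1.ne'
  have h0' : P.real (A ∩ {ω | G ω = 0}) ≠ 0 := (measureReal_ne_zero_iff).2 h0.ne'
  rw [condVarEvent, condExpEvent_eq_condProbEvent_of_binary hG hG01]
  simp only [condProbEvent, ← measureReal_def]
  rw [inter_comm {ω | G ω = 1}, ← measureReal_inter_add_inter_of_binary hG hG01 A]
  field_simp
  ring

end Moments

section JointProb

variable {Ω : Type*} [MeasurableSpace Ω] (P : Measure Ω) (Y Yhat G : Ω → ℝ)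

noncomputable def jointProb (y yh g : ℝ) : ℝ :=
  P.real ({ω | Y ω = y} ∩ {ω | Yhat ω = yh} ∩ {ω | G ω = g})

lemma measureReal_fst_snd_thd_eq_jointProb (y yh g : ℝ) :
    P.real ({ω | Y ω = y} ∩ ({ω | Yhat ω = yh} ∩ {ω | G ω = g}))
      = jointProb P Y Yhat G y yh g := by
  rw [jointProb, inter_assoc]

lemma measureReal_snd_fst_thd_eq_jointProb (y yh g : ℝ) :
    P.real ({ω | Yhat ω = yh} ∩ ({ω | Y ω = y} ∩ {ω | G ω = g}))
      = jointProb P Y Yhat G y yh g := by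
  rw [jointProb, inter_assoc, inter_left_comm]

variable [IsFiniteMeasure P]

lemma measureReal_fst_snd_eq_add_jointProb (hG : Measurable G)
    (hG01 : ∀ ω, G ω = 0 ∨ G ω = 1) (y yh : ℝ) :
    P.real ({ω | Y ω = y} ∩ {ω | Yhat ω = yh})
      = jointProb P Y Yhat G y yh 1 + jointProb P Y Yhat G y yh 0 :=
  (measureReal_inter_add_inter_of_binary hG hG01 _).symm

lemma measureReal_snd_thd_eq_add_jointProb (hY : Measurable Y)
    (hY01 : ∀ ω, Y ω = 0 ∨ Y ω = 1) (yh g : ℝ) :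
    P.real ({ω | Yhat ω = yh} ∩ {ω | G ω = g})
      = jointProb P Y Yhat G 1 yh g + jointProb P Y Yhat G 0 yh g := by
  rw [← measureReal_inter_add_inter_of_binary hY hY01, inter_comm, inter_comm _ {ω | Y ω = 0},
    measureReal_fst_snd_thd_eq_jointProb, measureReal_fst_snd_thd_eq_jointProb]

lemma measureReal_fst_thd_eq_add_jointProb (hYhat : Measurable Yhat)
    (hYhat01 : ∀ ω, Yhat ω = 0 ∨ Yhat ω = 1) (y g : ℝ) :
    P.real ({ω | Y ω = y} ∩ {ω | G ω = g})
      = jointProb P Y Yhat G y 1 g + jointProb P Y Yhat G y 0 g := by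
  rw [← measureReal_inter_add_inter_of_binary hYhat hYhat01, jointProb, jointProb,
    inter_right_comm, inter_right_comm _ {ω | G ω = g}]

lemma measureReal_snd_eq_add (hY : Measurable Y) (hY01 : ∀ ω, Y ω = 0 ∨ Y ω = 1) (yh : ℝ) :
    P.real {ω | Yhat ω = yh}
      = P.real ({ω | Y ω = 1} ∩ {ω | Yhat ω = yh}) +
          P.real ({ω | Y ω = 0} ∩ {ω | Yhat ω = yh}) := by
  rw [← measureReal_inter_add_inter_of_binary hY hY01, inter_comm, inter_comm {ω | Y ω = 0}]

lemma measureReal_fst_eq_add (hYhat : Measurable Yhat)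
    (hYhat01 : ∀ ω, Yhat ω = 0 ∨ Yhat ω = 1) (y : ℝ) :
    P.real {ω | Y ω = y}
      = P.real ({ω | Y ω = y} ∩ {ω | Yhat ω = 1}) +
          P.real ({ω | Y ω = y} ∩ {ω | Yhat ω = 0}) :=
  (measureReal_inter_add_inter_of_binary hYhat hYhat01 _).symm

end JointProb

/-- **accounting identity for classifiers.** For binary `Y`, `Ŷ`, `G` with all
relevant events of positive probability, with `Z_Ŷ = PPV·1{Ŷ=1} + FOR·1{Ŷ=0}`:
`MSE(Z_Ŷ)·(P(G=1|Y=1) − P(G=1|Y=0)) = ω_Ŷ(1)·ΔPPV + ω_Ŷ(0)·ΔFOR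
+ (PPV − FOR)·(ω_Y(1)·ΔTPR + ω_Y(0)·ΔFPR)`. -/
theorem stmt16 {Ω : Type*} [MeasurableSpace Ω] (P : Measure Ω) [IsProbabilityMeasure P]
    (Y Yhat G : Ω → ℝ) (hYm : Measurable Y) (hYhm : Measurable Yhat) (hGm : Measurable G)
    (hY01 : ∀ ω, Y ω = 0 ∨ Y ω = 1) (hYh01 : ∀ ω, Yhat ω = 0 ∨ Yhat ω = 1)
    (hG01 : ∀ ω, G ω = 0 ∨ G ω = 1)
    (hposYh : ∀ yh ∈ ({0, 1} : Set ℝ), ∀ g ∈ ({0, 1} : Set ℝ),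
      0 < P ({ω | Yhat ω = yh} ∩ {ω | G ω = g}))
    (hposY : ∀ y ∈ ({0, 1} : Set ℝ), ∀ g ∈ ({0, 1} : Set ℝ),
      0 < P ({ω | Y ω = y} ∩ {ω | G ω = g}))
    (PPV₁ PPV₀ FOR₁ FOR₀ TPR₁ TPR₀ FPR₁ FPR₀ PPV FOR : ℝ)
    (hPPV₁ : PPV₁ = condProbEvent P {ω | Y ω = 1} ({ω | Yhat ω = 1} ∩ {ω | G ω = 1}))
    (hPPV₀ : PPV₀ = condProbEvent P {ω | Y ω = 1} ({ω | Yhat ω = 1} ∩ {ω | G ω = 0}))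
    (hFOR₁ : FOR₁ = condProbEvent P {ω | Y ω = 1} ({ω | Yhat ω = 0} ∩ {ω | G ω = 1}))
    (hFOR₀ : FOR₀ = condProbEvent P {ω | Y ω = 1} ({ω | Yhat ω = 0} ∩ {ω | G ω = 0}))
    (hTPR₁ : TPR₁ = condProbEvent P {ω | Yhat ω = 1} ({ω | Y ω = 1} ∩ {ω | G ω = 1}))
    (hTPR₀ : TPR₀ = condProbEvent P {ω | Yhat ω = 1} ({ω | Y ω = 1} ∩ {ω | G ω = 0}))
    (hFPR₁ : FPR₁ = condProbEvent P {ω | Yhat ω = 1} ({ω | Y ω = 0} ∩ {ω | G ω = 1}))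
    (hFPR₀ : FPR₀ = condProbEvent P {ω | Yhat ω = 1} ({ω | Y ω = 0} ∩ {ω | G ω = 0}))
    (hPPV : PPV = condProbEvent P {ω | Y ω = 1} {ω | Yhat ω = 1})
    (hFOR : FOR = condProbEvent P {ω | Y ω = 1} {ω | Yhat ω = 0})
    (Z : Ω → ℝ)
    (hZ : ∀ ω, Z ω = PPV * (if Yhat ω = 1 then 1 else 0) +
      FOR * (if Yhat ω = 0 then 1 else 0)) :
    (∫ ω, (Y ω - Z ω) ^ 2 ∂P) *
        (condProbEvent P {ω | G ω = 1} {ω | Y ω = 1} -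
          condProbEvent P {ω | G ω = 1} {ω | Y ω = 0})
      = condVarEvent P G {ω | Yhat ω = 1} * (P {ω | Yhat ω = 1}).toReal * (PPV₁ - PPV₀) +
        condVarEvent P G {ω | Yhat ω = 0} * (P {ω | Yhat ω = 0}).toReal * (FOR₁ - FOR₀) +
        (PPV - FOR) *
          (condVarEvent P G {ω | Y ω = 1} * (P {ω | Y ω = 1}).toReal * (TPR₁ - TPR₀) +
            condVarEvent P G {ω | Y ω = 0} * (P {ω | Y ω = 0}).toReal * (FPR₁ - FPR₀)) := by
  have m0 : (0 : ℝ) ∈ ({0, 1} : Set ℝ) := by simp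
  have m1 : (1 : ℝ) ∈ ({0, 1} : Set ℝ) := by simp
  have hYh1 := measureReal_ne_zero_of_inter_pos (hposYh 1 m1 1 m1)
  have hYh0 := measureReal_ne_zero_of_inter_pos (hposYh 0 m0 1 m1)
  have hY1 := measureReal_ne_zero_of_inter_pos (hposY 1 m1 1 m1)
  have hY0 := measureReal_ne_zero_of_inter_pos (hposY 0 m0 1 m1)
  have hZ' : ∀ ω, Z ω = if Yhat ω = 1 then PPV else FOR := fun ω ↦ by
    rcases hYh01 ω with h | h <;> simp [hZ, h]
  have cov := condVarEvent_mul_measureReal_mul_sub_of_binary (P := P) hGm hG01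
  subst hPPV₁ hPPV₀ hFOR₁ hFOR₀ hTPR₁ hTPR₀ hFPR₁ hFPR₀ hPPV hFOR
  simp only [← measureReal_def]
  rw [integral_sq_sub_condProbEvent_of_binary hYm hY01 hYhm hYh01 hZ' hYh1 hYh0,
    cov _ _ (hposYh 1 m1 1 m1) (hposYh 1 m1 0 m0), cov _ _ (hposYh 0 m0 1 m1) (hposYh 0 m0 0 m0),
    cov _ _ (hposY 1 m1 1 m1) (hposY 1 m1 0 m0), cov _ _ (hposY 0 m0 1 m1) (hposY 0 m0 0 m0)]
  simp only [condProbEvent, ← measureReal_def, inter_comm {ω | G ω = 1}]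
  field_simp
  simp only [measureReal_snd_eq_add P Y Yhat hYm hY01,
    measureReal_fst_eq_add P Y Yhat hYhm hYh01,
    measureReal_fst_snd_thd_eq_jointProb P Y Yhat G,
    measureReal_snd_fst_thd_eq_jointProb P Y Yhat G,
    measureReal_fst_snd_eq_add_jointProb P Y Yhat G hGm hG01,
    measureReal_snd_thd_eq_add_jointProb P Y Yhat G hYm hY01,
    measureReal_fst_thd_eq_add_jointProb P Y Yhat G hYhm hYh01]
  ring
end

section
/- Suppose Y : Ω → ℝ is uniformly distributed on [0,1], X := 1{Y > 1/2}, Z := (1/4)·1{X = 0} + (3/4)·1{X = 1}, and G is a {0,1}-valued random variable with P(G = 1 | X = 0) = 0.1, P(G = 1 | X = 1) = 0.9, and G conditionally independent of Y given σ(X). Then: (i) E[Y | σ(Z)] = Z almost surely (global calibration); (ii) Cov(Y, G) > 0, so G and Y are not independent; (iii) P(Y = Z) = 0, so Z is not an oracle; (iv) E[Y | σ(Z) ⊔ σ(G)] = Z almost surely (perfect pointwise calibration within groups); and (v) E[Z | σ(Y) ⊔ σ(G)] = E[Z | σ(Y)] almost surely (perfect pointwise balance across groups). -/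
open MeasureTheory ProbabilityTheory

/-!
`σ(Z) = σ(X)` is generated by the two cells `{Y ≤ 1/2}` and `{Y > 1/2}`, so a conditional
expectation given `X`, or given `(X, G)`, is the average over the cell of the point. On each cell
of `X` the uniform variable `Y` has mean `1/4`, resp. `3/4`, which is `Z`: this is (i). Conditional
independence given `σ(X)` makes `G` and `Y` independent under `P(· | X = x)`, so refining a cell
of `X` by the value of `G` does not move the average of `Y`: this is (iv). By the law of total
covariance for the two cells, `Cov(Y, G) = ½ · ½ · (¼ - ¾) · (0.1 - 0.9) = 1/10`, giving (ii).
`Y` has no atoms and `Z` takes two values, giving (iii); and `Z` is a function of `Y`,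
giving (v).
-/

lemma Set.countable_range_of_forall_eq_or_eq {α β : Type*} {f : α → β} {a b : β}
    (h : ∀ x, f x = a ∨ f x = b) : (Set.range f).Countable :=
  ((Set.finite_singleton b).insert a).countable.mono (Set.range_subset_iff.mpr h)

lemma MeasurableSpace.comap_eq_comap_of_eq_const_add_mul {Ω : Type*} {X Z : Ω → ℝ} {a c : ℝ}
    (hc : c ≠ 0) (hZ : ∀ ω, Z ω = a + c * X ω) :
    MeasurableSpace.comap Z inferInstance = MeasurableSpace.comap X inferInstance :=
  le_antisymm (comap_le_comap_of_eq_comp (fun x ↦ a + c * x) (by fun_prop) (funext hZ))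
    (comap_le_comap_of_eq_comp (fun z ↦ (z - a) / c) (by fun_prop)
      (funext fun ω ↦ by simp only [Function.comp_apply, hZ]; field_simp; ring))

namespace ProbabilityTheory

variable {Ω β : Type*} {mΩ : MeasurableSpace Ω} {mβ : MeasurableSpace β} {μ : Measure Ω}

lemma condProbEvent_eq_measureReal_cond {A : Set Ω} (hA : MeasurableSet A) (B : Set Ω) :
    condProbEvent μ B A = (μ[|A]).real B := by
  rw [condProbEvent, measureReal_def, cond_apply hA, ENNReal.toReal_mul, ENNReal.toReal_inv,
    Set.inter_comm, div_eq_inv_mul]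

lemma integral_eq_measureReal_of_forall_eq_zero_or_eq_one {G : Ω → ℝ} (hG : Measurable G)
    (hG01 : ∀ ω, G ω = 0 ∨ G ω = 1) : ∫ ω, G ω ∂μ = μ.real {ω | G ω = 1} := by
  have hind : G = {ω | G ω = 1}.indicator 1 := by
    ext ω
    rcases hG01 ω with h | h <;> simp [h]
  conv_lhs => rw [hind]
  exact integral_indicator_one (hG (measurableSet_singleton 1))

lemma integral_cond_eq_condProbEvent {G : Ω → ℝ} (hG : Measurable G)
    (hG01 : ∀ ω, G ω = 0 ∨ G ω = 1) {A : Set Ω} (hA : MeasurableSet A) :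
    ∫ ω, G ω ∂μ[|A] = condProbEvent μ {ω | G ω = 1} A := by
  rw [condProbEvent_eq_measureReal_cond hA]
  exact integral_eq_measureReal_of_forall_eq_zero_or_eq_one hG hG01

lemma setIntegral_eq_measureReal_mul_integral_cond [IsFiniteMeasure μ] (f : Ω → ℝ) (s : Set Ω) :
    ∫ ω in s, f ω ∂μ = μ.real s * ∫ ω, f ω ∂μ[|s] := by
  by_cases hs : μ s = 0
  · simp [Measure.restrict_eq_zero.mpr hs, measureReal_def, hs]
  rw [cond, integral_smul_measure, ENNReal.toReal_inv, smul_eq_mul, ← measureReal_def,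
    mul_inv_cancel_left₀ ((measureReal_ne_zero_iff (measure_ne_top μ s)).mpr hs)]

lemma integral_eq_add_integral_cond_compl [IsFiniteMeasure μ] {f : Ω → ℝ} (hf : Integrable f μ)
    {s : Set Ω} (hs : MeasurableSet s) :
    ∫ ω, f ω ∂μ = μ.real s * ∫ ω, f ω ∂μ[|s] + μ.real sᶜ * ∫ ω, f ω ∂μ[|sᶜ] := by
  rw [← setIntegral_eq_measureReal_mul_integral_cond,
    ← setIntegral_eq_measureReal_mul_integral_cond, integral_add_compl hs hf]

/-- The law of total covariance for the partition `{s, sᶜ}`, when the within-cell covariances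
vanish. -/
lemma integral_mul_sub_mul_eq_of_indepFun_cond [IsProbabilityMeasure μ] {f g : Ω → ℝ}
    (hf : Integrable f μ) (hg : Integrable g μ) (hfg : Integrable (fun ω ↦ f ω * g ω) μ)
    {s : Set Ω} (hs : MeasurableSet s) (hs₁ : IndepFun f g μ[|s]) (hs₂ : IndepFun f g μ[|sᶜ]) :
    ∫ ω, f ω * g ω ∂μ - (∫ ω, f ω ∂μ) * ∫ ω, g ω ∂μ =
      μ.real s * μ.real sᶜ * (∫ ω, f ω ∂μ[|s] - ∫ ω, f ω ∂μ[|sᶜ]) *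
        (∫ ω, g ω ∂μ[|s] - ∫ ω, g ω ∂μ[|sᶜ]) := by
  have hf' := hf.1.mono_ac (cond_absolutelyContinuous (s := s))
  have hg' := hg.1.mono_ac (cond_absolutelyContinuous (s := s))
  have hfc := hf.1.mono_ac (cond_absolutelyContinuous (s := sᶜ))
  have hgc := hg.1.mono_ac (cond_absolutelyContinuous (s := sᶜ))
  rw [integral_eq_add_integral_cond_compl hf hs, integral_eq_add_integral_cond_compl hg hs,
    integral_eq_add_integral_cond_compl hfg hs, hs₁.integral_fun_mul_eq_mul_integral hf' hg',
    hs₂.integral_fun_mul_eq_mul_integral hfc hgc, probReal_compl_eq_one_sub hs]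
  ring

lemma condExp_sup_eq_of_stronglyMeasurable {E : Type*} [NormedAddCommGroup E]
    [NormedSpace ℝ E] [CompleteSpace E] [IsFiniteMeasure μ] {m m' : MeasurableSpace Ω}
    (hm : m ≤ mΩ) (hm' : m' ≤ mΩ) {f : Ω → E} (hf : StronglyMeasurable[m] f)
    (hf_int : Integrable f μ) : μ[f | m ⊔ m'] = μ[f | m] := by
  rw [condExp_of_stronglyMeasurable (sup_le hm hm') (hf.mono le_sup_left) hf_int,
    condExp_of_stronglyMeasurable hm hf hf_int]

lemma measure_setOf_eq_eq_zero {Y Z : Ω → ℝ} (hY : Measurable Y)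
    [NullSingletonClass (μ.map Y)] (hZ : (Set.range Z).Countable) :
    μ {ω | Y ω = Z ω} = 0 := by
  refine measure_mono_null (t := Y ⁻¹' Set.range Z)
    (fun ω (hω : Y ω = Z ω) ↦ (⟨ω, hω.symm⟩ : Y ω ∈ Set.range Z)) ?_
  rw [← Measure.map_apply hY hZ.measurableSet]
  exact hZ.measure_zero _

lemma ae_measure_preimage_singleton_ne_zero {W : Ω → β} (hW : (Set.range W).Countable) :
    ∀ᵐ ω ∂μ, μ (W ⁻¹' {W ω}) ≠ 0 := by
  rw [ae_iff]
  refine measure_mono_null (t := ⋃ b ∈ {b ∈ Set.range W | μ (W ⁻¹' {b}) = 0}, W ⁻¹' {b})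
    (fun ω hω ↦ Set.mem_biUnion ⟨⟨ω, rfl⟩, not_not.mp hω⟩ rfl) ?_
  exact (measure_biUnion_null_iff (hW.mono (Set.sep_subset _ _))).mpr fun b hb ↦ hb.2

section DiscreteConditioning

variable [MeasurableSingletonClass β]

/-- `μ[f | σ(X)]` is constant on each fiber of `X`, so its integral over the fiber pins the
value. -/
lemma condExp_comap_eq_integral_cond [IsFiniteMeasure μ] {X : Ω → β} (hX : Measurable X)
    {f : Ω → ℝ} (hf : Integrable f μ) {ω : Ω} (hω : μ (X ⁻¹' {X ω}) ≠ 0) :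
    μ[f | mβ.comap X] ω = ∫ y, f y ∂μ[|X ⁻¹' {X ω}] := by
  set A := X ⁻¹' {X ω}
  have hA : MeasurableSet[mβ.comap X] A := ⟨{X ω}, measurableSet_singleton _, rfl⟩
  have hconst : Set.EqOn (μ[f | mβ.comap X]) (fun _ ↦ μ[f | mβ.comap X] ω) A := fun _ hω' ↦
    stronglyMeasurable_condExp.factorsThrough hω'
  have hint := setIntegral_condExp hX.comap_le hf hA
  rw [setIntegral_congr_fun (hX.comap_le _ hA) hconst, setIntegral_const, smul_eq_mul,
    setIntegral_eq_measureReal_mul_integral_cond] at hint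
  exact mul_left_cancel₀ ((measureReal_ne_zero_iff (measure_ne_top μ A)).mpr hω) hint

lemma condExp_comap_ae_eq_integral_cond [IsFiniteMeasure μ] {X : Ω → β} (hX : Measurable X)
    (hXc : (Set.range X).Countable) {f : Ω → ℝ} (hf : Integrable f μ) :
    μ[f | mβ.comap X] =ᵐ[μ] fun ω ↦ ∫ y, f y ∂μ[|X ⁻¹' {X ω}] := by
  filter_upwards [ae_measure_preimage_singleton_ne_zero hXc] with ω hω
  exact condExp_comap_eq_integral_cond hX hf hω

lemma condExp_indicator_comap_eq_cond [IsFiniteMeasure μ] {X : Ω → β} (hX : Measurable X)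
    {s : Set Ω} (hs : MeasurableSet s) {ω : Ω} (hω : μ (X ⁻¹' {X ω}) ≠ 0) :
    (μ⟦s | (mβ.comap X)⟧) ω = (μ[|X ⁻¹' {X ω}]).real s := by
  rw [condExp_comap_eq_integral_cond hX ((integrable_const 1).indicator hs) hω,
    integral_indicator_const _ hs, smul_eq_mul, mul_one]

lemma CondIndepFun.indepFun_cond_fiber [StandardBorelSpace Ω] [IsFiniteMeasure μ]
    {γ δ : Type*} [MeasurableSpace γ] [MeasurableSpace δ] {X : Ω → β} (hX : Measurable X)
    {f : Ω → γ} {g : Ω → δ} (hf : Measurable f) (hg : Measurable g)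
    (hfg : CondIndepFun (mβ.comap X) hX.comap_le f g μ) (x : β) :
    IndepFun f g μ[|X ⁻¹' {x}] := by
  rw [indepFun_iff_measure_inter_preimage_eq_mul]
  intro s t hs ht
  by_cases hx : μ (X ⁻¹' {x}) = 0
  · simp [cond_eq_zero_of_meas_eq_zero hx]
  have : (ae (μ.restrict (X ⁻¹' {x}))).NeBot := ae_neBot.mpr (by simpa using hx)
  obtain ⟨ω, rfl, hω⟩ := ((ae_restrict_mem (hX (measurableSet_singleton x))).and
    (ae_restrict_of_ae
      ((condIndepFun_iff_condExp_inter_preimage_eq_mul hf hg).mp hfg s t hs ht))).exists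
  simp only [condExp_indicator_comap_eq_cond hX ((hf hs).inter (hg ht)) hx,
    condExp_indicator_comap_eq_cond hX (hf hs) hx, condExp_indicator_comap_eq_cond hX (hg ht) hx,
    measureReal_def, ← ENNReal.toReal_mul] at hω
  exact (ENNReal.toReal_eq_toReal_iff' (measure_ne_top _ _)
    (ENNReal.mul_ne_top (measure_ne_top _ _) (measure_ne_top _ _))).mp hω

lemma IndepFun.integral_cond_preimage [IsFiniteMeasure μ] {γ : Type*} [MeasurableSpace γ]
    {g : Ω → γ} {f : Ω → ℝ} (hgf : IndepFun g f μ) (hg : Measurable g) (hf : Measurable f)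
    {B : Set γ} (hB : MeasurableSet B) (hgB : μ (g ⁻¹' B) ≠ 0) :
    ∫ ω, f ω ∂μ[|g ⁻¹' B] = ∫ ω, f ω ∂μ := by
  have hind : IndepFun ((g ⁻¹' B).indicator (1 : Ω → ℝ)) f μ :=
    hgf.comp (φ := B.indicator 1) (measurable_const.indicator hB) measurable_id
  have hmul := hind.integral_fun_mul_eq_mul_integral
    (measurable_const.indicator (hg hB)).aestronglyMeasurable hf.aestronglyMeasurable
  have hset : ∫ ω, (g ⁻¹' B).indicator 1 ω * f ω ∂μ = ∫ ω in g ⁻¹' B, f ω ∂μ := by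
    rw [← integral_indicator (hg hB)]
    congr 1 with ω
    by_cases hω : ω ∈ g ⁻¹' B <;> simp [hω]
  rw [hset, integral_indicator_one (hg hB), setIntegral_eq_measureReal_mul_integral_cond] at hmul
  exact mul_left_cancel₀ ((measureReal_ne_zero_iff (measure_ne_top μ _)).mpr hgB) hmul

/-- On each cell `{X = x, g = y}` the average of `f` is the one over `{X = x}`, because `g` and
`f` are independent under `μ[|X = x]`. -/
lemma CondIndepFun.condExp_sup_comap_ae_eq [StandardBorelSpace Ω] [IsFiniteMeasure μ]
    {γ : Type*} {mγ : MeasurableSpace γ} [MeasurableSingletonClass γ] {X : Ω → β} {g : Ω → γ}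
    {f : Ω → ℝ} (hX : Measurable X) (hg : Measurable g) (hf : Measurable f)
    (hf_int : Integrable f μ) (hXc : (Set.range X).Countable) (hgc : (Set.range g).Countable)
    (hgf : CondIndepFun (mβ.comap X) hX.comap_le g f μ) :
    μ[f | mβ.comap X ⊔ mγ.comap g] =ᵐ[μ] μ[f | mβ.comap X] := by
  rw [← MeasurableSpace.comap_prodMk]
  filter_upwards [ae_measure_preimage_singleton_ne_zero (μ := μ)
    ((hXc.prod hgc).mono (Set.range_pair_subset X g))] with ω hω
  have hfiber : (fun ω' ↦ (X ω', g ω')) ⁻¹' {(X ω, g ω)} = X ⁻¹' {X ω} ∩ g ⁻¹' {g ω} := by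
    ext ω'
    simp [Prod.ext_iff]
  have hXω : μ (X ⁻¹' {X ω}) ≠ 0 := fun h ↦
    hω (measure_mono_null (hfiber ▸ Set.inter_subset_left) h)
  have hgω : μ[|X ⁻¹' {X ω}] (g ⁻¹' {g ω}) ≠ 0 := by
    rw [cond_apply (hX (measurableSet_singleton _)), ← hfiber]
    exact mul_ne_zero (ENNReal.inv_ne_zero.mpr (measure_ne_top μ _)) hω
  refine (condExp_comap_eq_integral_cond (hX.prodMk hg) hf_int hω).trans ?_
  rw [hfiber,
    ← cond_cond_eq_cond_inter (hX (measurableSet_singleton _)) (hg (measurableSet_singleton _)) μ,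
    (hgf.indepFun_cond_fiber hX hg hf _).integral_cond_preimage hg hf
      (measurableSet_singleton _) hgω, condExp_comap_eq_integral_cond hX hf_int hXω]

lemma CondIndepFun.integral_mul_sub_mul_eq_of_forall_eq_or_eq [StandardBorelSpace Ω]
    [IsProbabilityMeasure μ] {X : Ω → β} {a b : β} (hab : a ≠ b) (hX : Measurable X)
    (hXab : ∀ ω, X ω = a ∨ X ω = b) {f g : Ω → ℝ} (hf : Measurable f) (hg : Measurable g)
    (hf_int : Integrable f μ) (hg_int : Integrable g μ)
    (hfg_int : Integrable (fun ω ↦ f ω * g ω) μ)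
    (hgf : CondIndepFun (mβ.comap X) hX.comap_le g f μ) :
    ∫ ω, f ω * g ω ∂μ - (∫ ω, f ω ∂μ) * ∫ ω, g ω ∂μ =
      μ.real (X ⁻¹' {a}) * μ.real (X ⁻¹' {b}) *
        (∫ ω, f ω ∂μ[|X ⁻¹' {a}] - ∫ ω, f ω ∂μ[|X ⁻¹' {b}]) *
        (∫ ω, g ω ∂μ[|X ⁻¹' {a}] - ∫ ω, g ω ∂μ[|X ⁻¹' {b}]) := by
  have hb : X ⁻¹' {b} = (X ⁻¹' {a})ᶜ := by
    ext ω
    rcases hXab ω with h | h <;> simp [h, hab, hab.symm]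
  rw [hb]
  exact integral_mul_sub_mul_eq_of_indepFun_cond hf_int hg_int hfg_int
    (hX (measurableSet_singleton a)) (hgf.indepFun_cond_fiber hX hg hf a).symm
    (hb ▸ (hgf.indepFun_cond_fiber hX hg hf b).symm)

end DiscreteConditioning

section Uniform

variable {Y : Ω → ℝ}

lemma measureReal_preimage_of_map_eq_restrict {I t : Set ℝ} (hY : Measurable Y)
    (hYI : μ.map Y = volume.restrict I) (ht : MeasurableSet t) :
    μ.real (Y ⁻¹' t) = volume.real (t ∩ I) := by
  rw [measureReal_def, ← Measure.map_apply hY ht, hYI, Measure.restrict_apply ht]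
  rfl

lemma setIntegral_preimage_of_map_eq_restrict {I t : Set ℝ} (hY : Measurable Y)
    (hYI : μ.map Y = volume.restrict I) (ht : MeasurableSet t) :
    ∫ ω in Y ⁻¹' t, Y ω ∂μ = ∫ y in t ∩ I, y := by
  rw [← setIntegral_map (f := fun y : ℝ ↦ y) ht aestronglyMeasurable_id hY.aemeasurable, hYI,
    Measure.restrict_restrict ht]

lemma integrable_of_map_eq_restrict_Icc {a b : ℝ} (hY : Measurable Y)
    (hYI : μ.map Y = volume.restrict (Set.Icc a b)) : Integrable Y μ :=
  (integrable_map_measure aestronglyMeasurable_id hY.aemeasurable).mp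
    (by rw [hYI]; exact continuous_id.integrableOn_Icc)

variable [IsFiniteMeasure μ]

lemma uniform_measureReal_Iic_and_integral_cond {c : ℝ} (hc₀ : 0 < c) (hc₁ : c ≤ 1)
    (hY : Measurable Y) (hYunif : μ.map Y = volume.restrict (Set.Icc 0 1)) :
    μ.real (Y ⁻¹' Set.Iic c) = c ∧ ∫ ω, Y ω ∂μ[|Y ⁻¹' Set.Iic c] = c / 2 := by
  have hI : Set.Iic c ∩ Set.Icc 0 1 = Set.Icc 0 c := by
    ext y
    simp only [Set.mem_inter_iff, Set.mem_Iic, Set.mem_Icc]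
    constructor
    · rintro ⟨h₁, h₂, -⟩
      exact ⟨h₂, h₁⟩
    · rintro ⟨h₁, h₂⟩
      exact ⟨h₂, h₁, h₂.trans hc₁⟩
  have hP : μ.real (Y ⁻¹' Set.Iic c) = c := by
    rw [measureReal_preimage_of_map_eq_restrict hY hYunif measurableSet_Iic, hI,
      Real.volume_real_Icc_of_le hc₀.le, sub_zero]
  have hint := setIntegral_eq_measureReal_mul_integral_cond (μ := μ) Y (Y ⁻¹' Set.Iic c)
  rw [setIntegral_preimage_of_map_eq_restrict hY hYunif measurableSet_Iic, hI,
    integral_Icc_eq_integral_Ioc, ← intervalIntegral.integral_of_le hc₀.le, integral_id,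
    hP] at hint
  refine ⟨hP, mul_left_cancel₀ hc₀.ne' ?_⟩
  rw [← hint]
  ring

lemma uniform_measureReal_Ioi_and_integral_cond {c : ℝ} (hc₀ : 0 ≤ c) (hc₁ : c < 1)
    (hY : Measurable Y) (hYunif : μ.map Y = volume.restrict (Set.Icc 0 1)) :
    μ.real (Y ⁻¹' Set.Ioi c) = 1 - c ∧ ∫ ω, Y ω ∂μ[|Y ⁻¹' Set.Ioi c] = (1 + c) / 2 := by
  have hI : Set.Ioi c ∩ Set.Icc 0 1 = Set.Ioc c 1 := by
    ext y
    simp only [Set.mem_inter_iff, Set.mem_Ioi, Set.mem_Icc, Set.mem_Ioc]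
    constructor
    · rintro ⟨h₁, -, h₂⟩
      exact ⟨h₁, h₂⟩
    · rintro ⟨h₁, h₂⟩
      exact ⟨h₁, hc₀.trans h₁.le, h₂⟩
  have hP : μ.real (Y ⁻¹' Set.Ioi c) = 1 - c := by
    rw [measureReal_preimage_of_map_eq_restrict hY hYunif measurableSet_Ioi, hI,
      Real.volume_real_Ioc_of_le hc₁.le]
  have hint := setIntegral_eq_measureReal_mul_integral_cond (μ := μ) Y (Y ⁻¹' Set.Ioi c)
  rw [setIntegral_preimage_of_map_eq_restrict hY hYunif measurableSet_Ioi, hI,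
    ← intervalIntegral.integral_of_le hc₁.le, integral_id, hP] at hint
  refine ⟨hP, mul_left_cancel₀ (sub_pos.mpr hc₁).ne' ?_⟩
  rw [← hint]
  ring

lemma uniform_threshold_cells {X : Ω → ℝ} (hY : Measurable Y)
    (hYunif : μ.map Y = volume.restrict (Set.Icc 0 1))
    (hX : ∀ ω, X ω = if Y ω > 1 / 2 then 1 else 0) :
    μ.real (X ⁻¹' {0}) = 1 / 2 ∧ μ.real (X ⁻¹' {1}) = 1 / 2 ∧
      ∫ ω, Y ω ∂μ[|X ⁻¹' {0}] = 1 / 4 ∧ ∫ ω, Y ω ∂μ[|X ⁻¹' {1}] = 3 / 4 := by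
  have hA₀ : X ⁻¹' {0} = Y ⁻¹' Set.Iic (1 / 2) := by ext ω; simp [hX ω]
  have hA₁ : X ⁻¹' {1} = Y ⁻¹' Set.Ioi (1 / 2) := by ext ω; simp [hX ω]
  obtain ⟨hP₀, hY₀⟩ := uniform_measureReal_Iic_and_integral_cond (c := 1 / 2)
    (by norm_num) (by norm_num) hY hYunif
  obtain ⟨hP₁, hY₁⟩ := uniform_measureReal_Ioi_and_integral_cond (c := 1 / 2)
    (by norm_num) (by norm_num) hY hYunif
  rw [hA₀, hA₁, hP₀, hY₀, hP₁, hY₁]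
  norm_num

end Uniform

end ProbabilityTheory

theorem stmt19_general {Ω : Type*} [mΩ : MeasurableSpace Ω] [StandardBorelSpace Ω]
    (P : Measure Ω) [IsProbabilityMeasure P]
    (Y X Z G : Ω → ℝ) (hYm : Measurable Y) (hXm : Measurable X) (hZm : Measurable Z)
    (hGm : Measurable G)
    (hYunif : Measure.map Y P = MeasureTheory.volume.restrict (Set.Icc (0 : ℝ) 1))
    (hX : ∀ ω, X ω = if Y ω > 1 / 2 then 1 else 0)
    (hZ : ∀ ω, Z ω = (1 / 4) * (if X ω = 0 then 1 else 0) +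
      (3 / 4) * (if X ω = 1 then 1 else 0))
    (hG01 : ∀ ω, G ω = 0 ∨ G ω = 1)
    (hG0 : condProbEvent P {ω | G ω = 1} {ω | X ω = 0} = 0.1)
    (hG1 : condProbEvent P {ω | G ω = 1} {ω | X ω = 1} = 0.9)
    (hGY : CondIndepFun (MeasurableSpace.comap X inferInstance) hXm.comap_le G Y P) :
    (P[Y | MeasurableSpace.comap Z inferInstance] =ᵐ[P] Z) ∧
    ((0 < (∫ ω, Y ω * G ω ∂P) - (∫ ω, Y ω ∂P) * ∫ ω, G ω ∂P) ∧ ¬ IndepFun G Y P) ∧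
    (P {ω | Y ω = Z ω} = 0) ∧
    (P[Y | MeasurableSpace.comap Z inferInstance ⊔ MeasurableSpace.comap G inferInstance]
        =ᵐ[P] Z) ∧
    (P[Z | MeasurableSpace.comap Y inferInstance ⊔ MeasurableSpace.comap G inferInstance]
        =ᵐ[P] P[Z | MeasurableSpace.comap Y inferInstance]) := by
  have hX01 : ∀ ω, X ω = 0 ∨ X ω = 1 := fun ω ↦ by rw [hX ω]; split_ifs <;> simp
  have hZX : ∀ ω, Z ω = 1 / 4 + 1 / 2 * X ω := fun ω ↦ by
    rcases hX01 ω with h | h <;> norm_num [hZ ω, h]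
  have hZval : ∀ ω, Z ω = 1 / 4 ∨ Z ω = 3 / 4 := fun ω ↦ by
    rcases hX01 ω with h | h <;> norm_num [hZX ω, h]
  obtain ⟨hP₀, hP₁, hY₀, hY₁⟩ := uniform_threshold_cells hYm hYunif hX
  have hYint := integrable_of_map_eq_restrict_Icc hYm hYunif
  have hGbound : ∀ ω, ‖G ω‖ ≤ 1 := fun ω ↦ by rcases hG01 ω with h | h <;> simp [h]
  have hσZX := MeasurableSpace.comap_eq_comap_of_eq_const_add_mul (by norm_num) hZX
  have hσXY : MeasurableSpace.comap X inferInstance ≤ MeasurableSpace.comap Y inferInstance :=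
    MeasurableSpace.comap_le_comap_of_eq_comp _
      (Measurable.ite measurableSet_Ioi measurable_const measurable_const) (funext hX)
  have hZY : Measurable[MeasurableSpace.comap Y inferInstance] Z :=
    measurable_iff_comap_le.mpr (hσZX.trans_le hσXY)
  have hXc := Set.countable_range_of_forall_eq_or_eq hX01
  have hcalib : P[Y | MeasurableSpace.comap X inferInstance] =ᵐ[P] Z := by
    refine (condExp_comap_ae_eq_integral_cond hXm hXc hYint).trans (.of_forall fun ω ↦ ?_)
    rcases hX01 ω with h | h <;> simp only [h, hY₀, hY₁, hZX] <;> norm_num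
  have hEG₀ : ∫ ω, G ω ∂P[|X ⁻¹' {0}] = 0.1 :=
    (integral_cond_eq_condProbEvent hGm hG01 (hXm (measurableSet_singleton 0))).trans hG0
  have hEG₁ : ∫ ω, G ω ∂P[|X ⁻¹' {1}] = 0.9 :=
    (integral_cond_eq_condProbEvent hGm hG01 (hXm (measurableSet_singleton 1))).trans hG1
  have hcov : 0 < (∫ ω, Y ω * G ω ∂P) - (∫ ω, Y ω ∂P) * ∫ ω, G ω ∂P := by
    rw [hGY.integral_mul_sub_mul_eq_of_forall_eq_or_eq zero_ne_one hXm hX01 hYm hGm hYint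
      (.of_bound hGm.aestronglyMeasurable 1 (.of_forall hGbound))
      (hYint.mul_bdd hGm.aestronglyMeasurable (.of_forall hGbound)), hP₀, hP₁, hY₀, hY₁,
      hEG₀, hEG₁]
    norm_num
  have hZint : Integrable Z P := .of_bound hZm.aestronglyMeasurable 1
    (.of_forall fun ω ↦ by rcases hZval ω with h | h <;> norm_num [h])
  have : NullSingletonClass (P.map Y) := by rw [hYunif]; infer_instance
  refine ⟨hσZX ▸ hcalib, ⟨hcov, fun hind ↦ hcov.ne' ?_⟩,
    measure_setOf_eq_eq_zero hYm (Set.countable_range_of_forall_eq_or_eq hZval), ?_, ?_⟩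
  · rw [hind.symm.integral_fun_mul_eq_mul_integral hYm.aestronglyMeasurable
      hGm.aestronglyMeasurable, sub_self]
  · rw [hσZX]
    exact (hGY.condExp_sup_comap_ae_eq hXm hGm hYm hYint hXc
      (Set.countable_range_of_forall_eq_or_eq hG01)).trans hcalib
  · exact .of_eq (condExp_sup_eq_of_stronglyMeasurable hYm.comap_le hGm.comap_le
      hZY.stronglyMeasurable hZint)

/-- **stylized possibility example.** If `Y` is uniform on `[0,1]`,
`X = 1{Y > 1/2}`, `Z = (1/4)·1{X=0} + (3/4)·1{X=1}`, and `G` is {0,1}-valued with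
`P(G=1|X=0) = 0.1`, `P(G=1|X=1) = 0.9`, and `G ⟂ Y | σ(X)`, then: (i) `Z` is globally
calibrated; (ii) `Cov(Y,G) > 0`, so `G` and `Y` are not independent; (iii) `P(Y = Z) = 0`,
so `Z` is not an oracle; (iv) perfect pointwise calibration within groups; and (v) perfect
pointwise balance across groups. -/
theorem stmt19 {Ω : Type*} [mΩ : MeasurableSpace Ω] [StandardBorelSpace Ω] [Nonempty Ω]
    (P : Measure Ω) [IsProbabilityMeasure P]
    (Y X Z G : Ω → ℝ) (hYm : Measurable Y) (hXm : Measurable X) (hZm : Measurable Z)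
    (hGm : Measurable G)
    (hYunif : Measure.map Y P = MeasureTheory.volume.restrict (Set.Icc (0 : ℝ) 1))
    (hX : ∀ ω, X ω = if Y ω > 1 / 2 then 1 else 0)
    (hZ : ∀ ω, Z ω = (1 / 4) * (if X ω = 0 then 1 else 0) +
      (3 / 4) * (if X ω = 1 then 1 else 0))
    (hG01 : ∀ ω, G ω = 0 ∨ G ω = 1)
    (hG0 : condProbEvent P {ω | G ω = 1} {ω | X ω = 0} = 0.1)
    (hG1 : condProbEvent P {ω | G ω = 1} {ω | X ω = 1} = 0.9)
    (hGY : CondIndepFun (MeasurableSpace.comap X inferInstance) hXm.comap_le G Y P) :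
    (P[Y | MeasurableSpace.comap Z inferInstance] =ᵐ[P] Z) ∧
    ((0 < (∫ ω, Y ω * G ω ∂P) - (∫ ω, Y ω ∂P) * ∫ ω, G ω ∂P) ∧ ¬ IndepFun G Y P) ∧
    (P {ω | Y ω = Z ω} = 0) ∧
    (P[Y | MeasurableSpace.comap Z inferInstance ⊔ MeasurableSpace.comap G inferInstance]
        =ᵐ[P] Z) ∧
    (P[Z | MeasurableSpace.comap Y inferInstance ⊔ MeasurableSpace.comap G inferInstance]
        =ᵐ[P] P[Z | MeasurableSpace.comap Y inferInstance]) :=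
  stmt19_general (mΩ := mΩ) P Y X Z G hYm hXm hZm hGm hYunif hX hZ hG01 hG0 hG1 hGY
end
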